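/- arXiv:1312.6508 — 4 statements merged into one kernel-verified Lean document; each statement's English description precedes it below -/
import Mathlib

section
/- Let Ω ⊂ ℝ^n be a bounded domain, p ≥ 1, and ν a probability measure on Ω. Suppose μ = u·ℒ^n minimizes 𝔉^p_ν over probability measures on Ω and 𝔉^p_ν(μ) < +∞. Then for every probability measure μ₁ = u₁·ℒ^n on Ω with 𝔉^p_ν(μ₁) < +∞, the inequality T_p(μ₁,ν) − T_p(μ,ν) + ∫_Ω f'(u(x))(u₁(x) − u(x)) dx ≥ 0 holds. -/
open MeasureTheory Set Filter Topology Metric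
open scoped ENNReal NNReal

noncomputable section

/-- Euclidean space ℝⁿ. -/
abbrev Rn (n : ℕ) := EuclideanSpace ℝ (Fin n)

/-- `μ` is a probability measure "on `Ω`", i.e. giving no mass to the complement of `Ω`. -/
def ProbOn {n : ℕ} (Ω : Set (Rn n)) (μ : Measure (Rn n)) : Prop :=
  IsProbabilityMeasure μ ∧ μ Ωᶜ = 0

/-- Transport plans (couplings) between two measures:  probability measures on the
product space whose marginals are `μ` and `ν`. -/
def Couplings {n : ℕ} (μ ν : Measure (Rn n)) : Set (Measure (Rn n × Rn n)) :=
  {γ | IsProbabilityMeasure γ ∧ γ.map Prod.fst = μ ∧ γ.map Prod.snd = ν}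

/-- The Monge–Kantorovich transport cost `T_p(μ,ν) = inf_γ ∫ |x−y|^p dγ`. -/
def Tcost {n : ℕ} (p : ℝ) (μ ν : Measure (Rn n)) : ℝ≥0∞ :=
  ⨅ γ ∈ Couplings μ ν, ∫⁻ z, ENNReal.ofReal (‖z.1 - z.2‖ ^ p) ∂γ

/-- The measure `u·ℒⁿ` on `Ω` (absolutely continuous with density `u`). -/
def densOn {n : ℕ} (Ω : Set (Rn n)) (u : Rn n → ℝ) : Measure (Rn n) :=
  (volume.restrict Ω).withDensity fun x => ENNReal.ofReal (u x)

/-- `F(μ) = ∫_Ω f(u)` if `μ = u·ℒⁿ` is absolutely continuous, `+∞` otherwise. -/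
def Ffun {n : ℕ} (f : ℝ → ℝ) (Ω : Set (Rn n)) (μ : Measure (Rn n)) : ℝ≥0∞ :=
  open scoped Classical in
  if μ ≪ (volume : Measure (Rn n)) then
    ∫⁻ x in Ω, ENNReal.ofReal (f ((μ.rnDeriv volume x).toReal)) else ⊤

/-- `G(ν) = ∑ᵢ g(aᵢ)` if `ν = ∑ᵢ aᵢ δ_{xᵢ}` is purely atomic (atoms at distinct points),
`+∞` (the infimum over the empty set) otherwise. -/
def Gfun {n : ℕ} (g : ℝ → ℝ) (ν : Measure (Rn n)) : ℝ≥0∞ :=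
  ⨅ r : {q : (ℕ → ℝ) × (ℕ → Rn n) //
      (∀ i, 0 ≤ q.1 i) ∧
      (∀ i j, q.1 i ≠ 0 → q.1 j ≠ 0 → q.2 i = q.2 j → i = j) ∧
      ν = Measure.sum fun i => ENNReal.ofReal (q.1 i) • Measure.dirac (q.2 i)},
    ∑' i, ENNReal.ofReal (g (r.1.1 i))

/-- The total cost functional `𝔉^p(μ,ν) = T_p(μ,ν) + F(μ) + G(ν)`. -/
def FFp {n : ℕ} (p : ℝ) (f g : ℝ → ℝ) (Ω : Set (Rn n)) (μ ν : Measure (Rn n)) : ℝ≥0∞ :=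
  Tcost p μ ν + Ffun f Ω μ + Gfun g ν

/-- The functional `𝔉^p_ν(μ) = T_p(μ,ν) + F(μ)` with `ν` fixed. -/
def FFnu {n : ℕ} (p : ℝ) (f : ℝ → ℝ) (Ω : Set (Rn n)) (ν μ : Measure (Rn n)) : ℝ≥0∞ :=
  Tcost p μ ν + Ffun f Ω μ

/-- A bounded domain: the closure of a nonempty connected bounded open set,
with Lebesgue-negligible boundary. -/
def IsBoundedDomain {n : ℕ} (Ω : Set (Rn n)) : Prop :=
  ∃ U : Set (Rn n), IsOpen U ∧ U.Nonempty ∧ IsConnected U ∧ Bornology.IsBounded U ∧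
    Ω = closure U ∧ volume (frontier Ω) = 0

/-- The `c`-transform `χ^c(y) = inf_{x∈Ω} (|x−y|^p − χ(x))` for the cost `c(x,y)=|x−y|^p`. -/
def ctransform {n : ℕ} (Ω : Set (Rn n)) (p : ℝ) (χ : Rn n → ℝ) (y : Rn n) : ℝ :=
  ⨅ x : Ω, (‖(x : Rn n) - y‖ ^ p - χ x)

/-- `ψ` is `c`-concave on `Ω` (for the cost `|x−y|^p`) if it is a `c`-transform. -/
def CConcave {n : ℕ} (Ω : Set (Rn n)) (p : ℝ) (ψ : Rn n → ℝ) : Prop :=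
  ∃ χ : Rn n → ℝ, ∀ y ∈ Ω, ψ y = ctransform Ω p χ y

/-- `ψ` is a Kantorovich potential for the transport from `μ` to `ν` with cost `|x−y|^p`. -/
def IsKantorovichPotential {n : ℕ} (Ω : Set (Rn n)) (p : ℝ)
    (μ ν : Measure (Rn n)) (ψ : Rn n → ℝ) : Prop :=
  (∀ x ∈ Ω, ∀ y ∈ Ω, ψ x + ctransform Ω p ψ y ≤ ‖x - y‖ ^ p) ∧
  (∫ x in Ω, ψ x ∂μ) + (∫ y in Ω, ctransform Ω p ψ y ∂ν) = (Tcost p μ ν).toReal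

/-- `μ` has finite `p`-th moment (i.e. `μ ∈ 𝒲_p`). -/
def FiniteMoment {n : ℕ} (p : ℝ) (μ : Measure (Rn n)) : Prop :=
  ∫⁻ x, ENNReal.ofReal (‖x‖ ^ p) ∂μ < ⊤

/-- Weak-* convergence of a sequence of measures. -/
def WeakStar {n : ℕ} (μs : ℕ → Measure (Rn n)) (μ : Measure (Rn n)) : Prop :=
  ∀ φ : Rn n → ℝ, Continuous φ →
    Tendsto (fun h => ∫ x, φ x ∂(μs h)) atTop (𝓝 (∫ x, φ x ∂μ))

end

/-!
Perturb the minimizer along the segment `μ_t = (1 - t) μ + t μ₁`, `t ∈ (0, 1]`, which stays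
admissible. Mixing near-optimal plans shows that `T_p(·, ν)` is convex along the segment, so
minimality gives `t (T_p(μ, ν) - T_p(μ₁, ν)) ≤ ∫ f(u_t) - f(u)`. By convexity of `f` the
difference quotients `(f(u_t) - f(u)) / t` decrease, as `t ↓ 0`, to `f'(u) (u₁ - u)`; monotone
convergence passes to the limit, the uniform lower bound making that limit integrable.
-/

section Slope

variable {f g : ℝ → ℝ} {f' g' : ℝ} {s : Set ℝ} {a b : ℝ}

lemma inv_natCast_add_one_mem_Ioc (k : ℕ) : ((k : ℝ) + 1)⁻¹ ∈ Ioc (0 : ℝ) 1 :=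
  ⟨by positivity, inv_le_one_of_one_le₀ (by simp)⟩

lemma ConvexOn.comp_lineMap (hf : ConvexOn ℝ s f) (ha : a ∈ s) (hb : b ∈ s) :
    ConvexOn ℝ (Icc (0 : ℝ) 1) fun t : ℝ => f (AffineMap.lineMap a b t) :=
  (hf.comp_affineMap (AffineMap.lineMap a b)).subset
    (fun _ ht => hf.1.lineMap_mem ha hb ht) (convex_Icc 0 1)

lemma HasDerivWithinAt.comp_lineMap (hf : HasDerivWithinAt f f' s a) (hs : Convex ℝ s)
    (ha : a ∈ s) (hb : b ∈ s) :
    HasDerivWithinAt (fun t : ℝ => f (AffineMap.lineMap a b t)) (f' * (b - a)) (Icc 0 1) 0 := by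
  refine HasDerivWithinAt.comp (0 : ℝ) ?_ AffineMap.hasDerivAt_lineMap.hasDerivWithinAt
    (fun _ ht => hs.lineMap_mem ha hb ht)
  simpa using hf

lemma ConvexOn.antitone_slope_inv_add_one (hg : ConvexOn ℝ (Icc (0 : ℝ) 1) g) :
    Antitone fun k : ℕ => slope g 0 ((k : ℝ) + 1)⁻¹ := by
  have hmem (k : ℕ) : ((k : ℝ) + 1)⁻¹ ∈ Icc (0 : ℝ) 1 \ {0} :=
    ⟨Ioc_subset_Icc_self (inv_natCast_add_one_mem_Ioc k), (inv_natCast_add_one_mem_Ioc k).1.ne'⟩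
  exact fun j k hjk => hg.slope_mono (by simp) (hmem k) (hmem j)
    (inv_anti₀ (by positivity) (by simpa using hjk))

lemma HasDerivWithinAt.tendsto_slope_inv_add_one (hg : HasDerivWithinAt g g' (Icc (0 : ℝ) 1) 0) :
    Tendsto (fun k : ℕ => slope g 0 ((k : ℝ) + 1)⁻¹) atTop (𝓝 g') := by
  refine (hasDerivWithinAt_iff_tendsto_slope.1 hg).comp (tendsto_nhdsWithin_iff.2 ⟨?_, ?_⟩)
  · simpa using tendsto_one_div_add_atTop_nhds_zero_nat (𝕜 := ℝ)
  · exact .of_forall fun k => ⟨Ioc_subset_Icc_self (inv_natCast_add_one_mem_Ioc k),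
      (inv_natCast_add_one_mem_Ioc k).1.ne'⟩

end Slope

lemma ContinuousOn.measurable_comp_of_nonneg {α : Type*} [MeasurableSpace α] {g : ℝ → ℝ}
    (hg : ContinuousOn g (Ici 0)) {v : α → ℝ} (hv : Measurable v) (hv0 : ∀ x, 0 ≤ v x) :
    Measurable fun x => g (v x) := by
  have hcont : Continuous fun t => g (max t 0) :=
    hg.comp_continuous (continuous_id.max continuous_const) fun t => le_max_right t 0
  convert hcont.measurable.comp hv using 2 with x
  simp [max_eq_left (hv0 x)]

lemma le_integral_of_antitone_of_tendsto {α : Type*} [MeasurableSpace α] {μ : Measure α}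
    {q : ℕ → α → ℝ} {L : α → ℝ} {c : ℝ} (hq : ∀ k, Integrable (q k) μ)
    (h_anti : ∀ᵐ x ∂μ, Antitone fun k => q k x)
    (h_lim : ∀ᵐ x ∂μ, Tendsto (fun k => q k x) atTop (𝓝 (L x)))
    (hc : ∀ k, c ≤ ∫ x, q k x ∂μ) : c ≤ ∫ x, L x ∂μ := by
  have h_gap : Tendsto (fun k => ∫⁻ x, ENNReal.ofReal (q 0 x - q k x) ∂μ) atTop
      (𝓝 (∫⁻ x, ENNReal.ofReal (q 0 x - L x) ∂μ)) := by
    refine lintegral_tendsto_of_tendsto_of_monotone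
      (fun k => ((hq 0).sub (hq k)).1.aemeasurable.ennreal_ofReal) ?_ ?_
    · filter_upwards [h_anti] with x hx j k hjk
      exact ENNReal.ofReal_le_ofReal (by linarith [hx hjk])
    · filter_upwards [h_lim] with x hx
      exact (ENNReal.continuous_ofReal.tendsto _).comp (tendsto_const_nhds.sub hx)
  have h_gap_le (k : ℕ) : ∫⁻ x, ENNReal.ofReal (q 0 x - q k x) ∂μ
      ≤ ENNReal.ofReal (∫ x, q 0 x ∂μ - c) := by
    have h_int : Integrable (fun x => q 0 x - q k x) μ := (hq 0).sub (hq k)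
    have h_nonneg : 0 ≤ᵐ[μ] fun x => q 0 x - q k x := by
      filter_upwards [h_anti] with x hx using sub_nonneg.2 (hx k.zero_le)
    rw [← ofReal_integral_eq_lintegral_ofReal h_int h_nonneg, integral_sub (hq 0) (hq k)]
    exact ENNReal.ofReal_le_ofReal (by linarith [hc k])
  have h_gap_int : Integrable (fun x => q 0 x - L x) μ := by
    refine ⟨(hq 0).1.sub (aestronglyMeasurable_of_tendsto_ae _ (fun k => (hq k).1) h_lim),
      (hasFiniteIntegral_iff_ofReal ?_).2 ?_⟩
    · filter_upwards [h_anti, h_lim] with x hx hxl using sub_nonneg.2 (hx.le_of_tendsto hxl 0)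
    · exact (le_of_tendsto' h_gap h_gap_le).trans_lt ENNReal.ofReal_lt_top
  have hL : Integrable L μ := ((hq 0).sub h_gap_int).congr (.of_forall fun x => by simp)
  exact ge_of_tendsto' (integral_tendsto_of_tendsto_of_antitone hq hL h_anti h_lim) hc

lemma ofReal_one_sub_add_ofReal {t : ℝ} (ht : t ∈ Icc (0 : ℝ) 1) :
    ENNReal.ofReal (1 - t) + ENNReal.ofReal t = 1 := by
  rw [← ENNReal.ofReal_add (sub_nonneg.2 ht.2) ht.1, sub_add_cancel, ENNReal.ofReal_one]

lemma isProbabilityMeasure_add_smul {α : Type*} [MeasurableSpace α] {μ μ₁ : Measure α}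
    [IsProbabilityMeasure μ] [IsProbabilityMeasure μ₁] {a b : ℝ≥0∞} (hab : a + b = 1) :
    IsProbabilityMeasure (a • μ + b • μ₁) :=
  ⟨by simp [hab]⟩

section Interpolation

variable {α : Type*} [MeasurableSpace α] {μ : Measure α} {f : ℝ → ℝ} {u u₁ : α → ℝ} {t : ℝ}

lemma lineMap_nonneg {a b : ℝ} (ha : 0 ≤ a) (hb : 0 ≤ b) (ht : t ∈ Icc (0 : ℝ) 1) :
    0 ≤ AffineMap.lineMap a b t :=
  (convex_Ici (0 : ℝ)).lineMap_mem (mem_Ici.2 ha) (mem_Ici.2 hb) ht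

lemma Measurable.lineMap (hu : Measurable u) (hu₁ : Measurable u₁) :
    Measurable fun x => AffineMap.lineMap (u x) (u₁ x) t := by
  simp only [AffineMap.lineMap_apply_ring]; fun_prop

lemma integrable_comp_lineMap (hf_nonneg : ∀ t, 0 ≤ t → 0 ≤ f t)
    (hf_conv : ConvexOn ℝ (Ici 0) f) (hf_cont : ContinuousOn f (Ici 0))
    (hu : Measurable u) (hu0 : ∀ x, 0 ≤ u x) (hu₁ : Measurable u₁) (hu₁0 : ∀ x, 0 ≤ u₁ x)
    (hint : Integrable (fun x => f (u x)) μ) (hint₁ : Integrable (fun x => f (u₁ x)) μ)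
    (ht : t ∈ Icc (0 : ℝ) 1) :
    Integrable (fun x => f (AffineMap.lineMap (u x) (u₁ x) t)) μ := by
  have hw0 (x : α) := lineMap_nonneg (hu0 x) (hu₁0 x) ht
  refine ((hint.const_mul (1 - t)).add (hint₁.const_mul t)).mono'
    (hf_cont.measurable_comp_of_nonneg (hu.lineMap hu₁) hw0).aestronglyMeasurable
    (.of_forall fun x => ?_)
  rw [Real.norm_of_nonneg (hf_nonneg _ (hw0 x))]
  simpa [AffineMap.lineMap_apply_ring, smul_eq_mul] using
    hf_conv.2 (hu0 x) (hu₁0 x) (sub_nonneg.2 ht.2) ht.1 (sub_add_cancel 1 t)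

lemma integrable_slope_comp_lineMap (hint : Integrable (fun x => f (u x)) μ)
    (hint_t : Integrable (fun x => f (AffineMap.lineMap (u x) (u₁ x) t)) μ) :
    Integrable (fun x => slope (fun s : ℝ => f (AffineMap.lineMap (u x) (u₁ x) s)) 0 t) μ := by
  simp only [slope_def_field, AffineMap.lineMap_apply_zero, sub_zero]
  exact (hint_t.sub hint).div_const t

lemma integral_slope_comp_lineMap (hint : Integrable (fun x => f (u x)) μ)
    (hint_t : Integrable (fun x => f (AffineMap.lineMap (u x) (u₁ x) t)) μ) :
    ∫ x, slope (fun s : ℝ => f (AffineMap.lineMap (u x) (u₁ x) s)) 0 t ∂μ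
      = ((∫ x, f (AffineMap.lineMap (u x) (u₁ x) t) ∂μ) - ∫ x, f (u x) ∂μ) / t := by
  simp only [slope_def_field, AffineMap.lineMap_apply_zero, sub_zero]
  rw [integral_div, integral_sub hint_t hint]

end Interpolation

section DensOn

variable {n : ℕ} {Ω : Set (Rn n)} {f : ℝ → ℝ} {v : Rn n → ℝ}

lemma Ffun_densOn (hv : Measurable v) (hv0 : ∀ x, 0 ≤ v x) :
    Ffun f Ω (densOn Ω v) = ∫⁻ x in Ω, ENNReal.ofReal (f (v x)) := by
  set S := toMeasurable volume Ω
  have hS : volume.restrict S = volume.restrict Ω := Measure.restrict_toMeasurable_of_sFinite Ω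
  have hdens : densOn Ω v = volume.withDensity (S.indicator fun x => ENNReal.ofReal (v x)) := by
    rw [densOn, ← hS, withDensity_indicator (measurableSet_toMeasurable _ _)]
  have hrn : ∀ᵐ x ∂volume.restrict S, (densOn Ω v).rnDeriv volume x = ENNReal.ofReal (v x) := by
    filter_upwards [ae_restrict_of_ae (hdens ▸ Measure.rnDeriv_withDensity volume
      (hv.ennreal_ofReal.indicator (measurableSet_toMeasurable _ _))),
      ae_restrict_mem (measurableSet_toMeasurable volume Ω)] with x hx hxS
    rw [hx, indicator_of_mem hxS]
  rw [Ffun, if_pos (hdens ▸ withDensity_absolutelyContinuous _ _), ← hS]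
  refine lintegral_congr_ae ?_
  filter_upwards [hrn] with x hx
  rw [hx, ENNReal.toReal_ofReal (hv0 x)]

lemma densOn_lineMap {u u₁ : Rn n → ℝ} (hu : Measurable u) (hu₁ : Measurable u₁)
    (hu0 : ∀ x, 0 ≤ u x) (hu₁0 : ∀ x, 0 ≤ u₁ x) {t : ℝ} (ht : t ∈ Icc (0 : ℝ) 1) :
    densOn Ω (fun x => AffineMap.lineMap (u x) (u₁ x) t)
      = ENNReal.ofReal (1 - t) • densOn Ω u + ENNReal.ofReal t • densOn Ω u₁ := by
  have h1t : 0 ≤ 1 - t := sub_nonneg.2 ht.2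
  have hdens : (fun x => ENNReal.ofReal (AffineMap.lineMap (u x) (u₁ x) t))
      = ENNReal.ofReal (1 - t) • (fun x => ENNReal.ofReal (u x))
        + ENNReal.ofReal t • fun x => ENNReal.ofReal (u₁ x) := by
    funext x
    simp only [AffineMap.lineMap_apply_ring, Pi.add_apply, Pi.smul_apply, smul_eq_mul]
    rw [← ENNReal.ofReal_mul h1t, ← ENNReal.ofReal_mul ht.1,
      ← ENNReal.ofReal_add (mul_nonneg h1t (hu0 x)) (mul_nonneg ht.1 (hu₁0 x))]
  rw [densOn, hdens, withDensity_add_left (hu.ennreal_ofReal.const_smul _),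
    withDensity_smul _ hu.ennreal_ofReal, withDensity_smul _ hu₁.ennreal_ofReal]
  rfl

lemma integrable_of_Ffun_densOn_ne_top (hf_nonneg : ∀ t, 0 ≤ t → 0 ≤ f t)
    (hf_cont : ContinuousOn f (Ici 0)) (hv : Measurable v) (hv0 : ∀ x, 0 ≤ v x)
    (hF : Ffun f Ω (densOn Ω v) ≠ ⊤) :
    Integrable (fun x => f (v x)) (volume.restrict Ω) := by
  rw [Ffun_densOn hv hv0] at hF
  exact ⟨(hf_cont.measurable_comp_of_nonneg hv hv0).aestronglyMeasurable,
    (hasFiniteIntegral_iff_ofReal (.of_forall fun x => hf_nonneg _ (hv0 x))).2 hF.lt_top⟩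

lemma Ffun_densOn_eq_ofReal (hf_nonneg : ∀ t, 0 ≤ t → 0 ≤ f t) (hv : Measurable v)
    (hv0 : ∀ x, 0 ≤ v x) (hint : Integrable (fun x => f (v x)) (volume.restrict Ω)) :
    Ffun f Ω (densOn Ω v) = ENNReal.ofReal (∫ x in Ω, f (v x)) := by
  rw [Ffun_densOn hv hv0,
    ofReal_integral_eq_lintegral_ofReal hint (.of_forall fun x => hf_nonneg _ (hv0 x))]

end DensOn

section Transport

variable {n : ℕ} {Ω : Set (Rn n)} {p : ℝ} {μ μ₁ ν : Measure (Rn n)} {a b : ℝ≥0∞}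

lemma ProbOn.add_smul (hμ : ProbOn Ω μ) (hμ₁ : ProbOn Ω μ₁) (hab : a + b = 1) :
    ProbOn Ω (a • μ + b • μ₁) :=
  have := hμ.1; have := hμ₁.1
  ⟨isProbabilityMeasure_add_smul hab, by simp [hμ.2, hμ₁.2]⟩

lemma add_smul_mem_couplings {γ γ₁ : Measure (Rn n × Rn n)} (hγ : γ ∈ Couplings μ ν)
    (hγ₁ : γ₁ ∈ Couplings μ₁ ν) (hab : a + b = 1) :
    a • γ + b • γ₁ ∈ Couplings (a • μ + b • μ₁) ν := by
  obtain ⟨hγP, hγ_fst, hγ_snd⟩ := hγ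
  obtain ⟨hγ₁P, hγ₁_fst, hγ₁_snd⟩ := hγ₁
  refine ⟨isProbabilityMeasure_add_smul hab, ?_, ?_⟩
  · rw [Measure.map_add _ _ measurable_fst, Measure.map_smul, Measure.map_smul, hγ_fst, hγ₁_fst]
  · rw [Measure.map_add _ _ measurable_snd, Measure.map_smul, Measure.map_smul, hγ_snd, hγ₁_snd,
      ← add_smul, hab, one_smul]

lemma exists_mem_couplings_lintegral_lt (hT : Tcost p μ ν ≠ ⊤) {δ : ℝ≥0∞} (hδ : δ ≠ 0) :
    ∃ γ ∈ Couplings μ ν, ∫⁻ z, ENNReal.ofReal (‖z.1 - z.2‖ ^ p) ∂γ < Tcost p μ ν + δ := by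
  have h := ENNReal.lt_add_right hT hδ
  nth_rw 1 [Tcost] at h
  simpa only [iInf_lt_iff, exists_prop] using h

lemma Tcost_add_smul_le (hab : a + b = 1) (hT : Tcost p μ ν ≠ ⊤) (hT₁ : Tcost p μ₁ ν ≠ ⊤) :
    Tcost p (a • μ + b • μ₁) ν ≤ a * Tcost p μ ν + b * Tcost p μ₁ ν := by
  refine ENNReal.le_of_forall_pos_le_add fun δ hδ _ => ?_
  have hδ0 : (δ : ℝ≥0∞) ≠ 0 := by exact_mod_cast hδ.ne'
  obtain ⟨γ, hγ, hγ_lt⟩ := exists_mem_couplings_lintegral_lt hT hδ0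
  obtain ⟨γ₁, hγ₁, hγ₁_lt⟩ := exists_mem_couplings_lintegral_lt hT₁ hδ0
  calc Tcost p (a • μ + b • μ₁) ν
      ≤ ∫⁻ z, ENNReal.ofReal (‖z.1 - z.2‖ ^ p) ∂(a • γ + b • γ₁) :=
        iInf₂_le _ (add_smul_mem_couplings hγ hγ₁ hab)
    _ = a * ∫⁻ z, ENNReal.ofReal (‖z.1 - z.2‖ ^ p) ∂γ
          + b * ∫⁻ z, ENNReal.ofReal (‖z.1 - z.2‖ ^ p) ∂γ₁ := by
        rw [lintegral_add_measure, lintegral_smul_measure, lintegral_smul_measure]; rfl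
    _ ≤ a * (Tcost p μ ν + δ) + b * (Tcost p μ₁ ν + δ) := by gcongr
    _ = a * Tcost p μ ν + b * Tcost p μ₁ ν + δ := by rw [mul_add, mul_add,
        add_add_add_comm, ← add_mul, hab, one_mul]

end Transport

section Minimizer

variable {n : ℕ} {Ω : Set (Rn n)} {p : ℝ} {f : ℝ → ℝ} {ν : Measure (Rn n)} {u u₁ v : Rn n → ℝ}
  {t : ℝ}

lemma ProbOn.densOn_lineMap (hμP : ProbOn Ω (densOn Ω u)) (hμ₁P : ProbOn Ω (densOn Ω u₁))
    (hu : Measurable u) (hu0 : ∀ x, 0 ≤ u x) (hu₁ : Measurable u₁) (hu₁0 : ∀ x, 0 ≤ u₁ x)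
    (ht : t ∈ Icc (0 : ℝ) 1) :
    ProbOn Ω (densOn Ω fun x => AffineMap.lineMap (u x) (u₁ x) t) :=
  _root_.densOn_lineMap hu hu₁ hu0 hu₁0 ht ▸ hμP.add_smul hμ₁P (ofReal_one_sub_add_ofReal ht)

lemma FFnu_densOn_eq_ofReal (hf_nonneg : ∀ t, 0 ≤ t → 0 ≤ f t) (hv : Measurable v)
    (hv0 : ∀ x, 0 ≤ v x) (hT : Tcost p (densOn Ω v) ν ≠ ⊤)
    (hint : Integrable (fun x => f (v x)) (volume.restrict Ω)) :
    FFnu p f Ω ν (densOn Ω v)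
      = ENNReal.ofReal ((Tcost p (densOn Ω v) ν).toReal + ∫ x in Ω, f (v x)) := by
  rw [FFnu, Ffun_densOn_eq_ofReal hf_nonneg hv hv0 hint,
    ENNReal.ofReal_add ENNReal.toReal_nonneg (integral_nonneg fun x => hf_nonneg _ (hv0 x)),
    ENNReal.ofReal_toReal hT]

lemma FFnu_densOn_lineMap_le (hf_nonneg : ∀ t, 0 ≤ t → 0 ≤ f t)
    (hu : Measurable u) (hu0 : ∀ x, 0 ≤ u x) (hu₁ : Measurable u₁) (hu₁0 : ∀ x, 0 ≤ u₁ x)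
    (hT : Tcost p (densOn Ω u) ν ≠ ⊤) (hT₁ : Tcost p (densOn Ω u₁) ν ≠ ⊤)
    (ht : t ∈ Icc (0 : ℝ) 1)
    (hint_t : Integrable (fun x => f (AffineMap.lineMap (u x) (u₁ x) t)) (volume.restrict Ω)) :
    FFnu p f Ω ν (densOn Ω fun x => AffineMap.lineMap (u x) (u₁ x) t)
      ≤ ENNReal.ofReal ((1 - t) * (Tcost p (densOn Ω u) ν).toReal
          + t * (Tcost p (densOn Ω u₁) ν).toReal
          + ∫ x in Ω, f (AffineMap.lineMap (u x) (u₁ x) t)) := by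
  have hw0 (x : Rn n) := lineMap_nonneg (hu0 x) (hu₁0 x) ht
  have h₀ : 0 ≤ (1 - t) * (Tcost p (densOn Ω u) ν).toReal :=
    mul_nonneg (sub_nonneg.2 ht.2) ENNReal.toReal_nonneg
  have h₁ : 0 ≤ t * (Tcost p (densOn Ω u₁) ν).toReal := mul_nonneg ht.1 ENNReal.toReal_nonneg
  rw [FFnu, Ffun_densOn_eq_ofReal hf_nonneg (hu.lineMap hu₁) hw0 hint_t,
    densOn_lineMap hu hu₁ hu0 hu₁0 ht, ENNReal.ofReal_add (add_nonneg h₀ h₁)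
      (integral_nonneg fun x => hf_nonneg _ (hw0 x)), ENNReal.ofReal_add h₀ h₁,
    ENNReal.ofReal_mul (sub_nonneg.2 ht.2), ENNReal.ofReal_mul ht.1,
    ENNReal.ofReal_toReal hT, ENNReal.ofReal_toReal hT₁]
  gcongr
  exact Tcost_add_smul_le (ofReal_one_sub_add_ofReal ht) hT hT₁

lemma toReal_Tcost_sub_le_integral_slope (hf_nonneg : ∀ t, 0 ≤ t → 0 ≤ f t)
    (hf_conv : ConvexOn ℝ (Ici 0) f) (hf_cont : ContinuousOn f (Ici 0))
    (hu : Measurable u) (hu0 : ∀ x, 0 ≤ u x) (hu₁ : Measurable u₁) (hu₁0 : ∀ x, 0 ≤ u₁ x)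
    (hμP : ProbOn Ω (densOn Ω u)) (hμ₁P : ProbOn Ω (densOn Ω u₁))
    (hmin : ∀ μ', ProbOn Ω μ' → FFnu p f Ω ν (densOn Ω u) ≤ FFnu p f Ω ν μ')
    (hT : Tcost p (densOn Ω u) ν ≠ ⊤) (hT₁ : Tcost p (densOn Ω u₁) ν ≠ ⊤)
    (hint : Integrable (fun x => f (u x)) (volume.restrict Ω))
    (hint₁ : Integrable (fun x => f (u₁ x)) (volume.restrict Ω)) (ht : t ∈ Ioc (0 : ℝ) 1) :
    (Tcost p (densOn Ω u) ν).toReal - (Tcost p (densOn Ω u₁) ν).toReal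
      ≤ ∫ x in Ω, slope (fun s : ℝ => f (AffineMap.lineMap (u x) (u₁ x) s)) 0 t := by
  have ht' : t ∈ Icc (0 : ℝ) 1 := Ioc_subset_Icc_self ht
  have hint_t := integrable_comp_lineMap hf_nonneg hf_conv hf_cont hu hu0 hu₁ hu₁0 hint hint₁ ht'
  have h := (FFnu_densOn_eq_ofReal hf_nonneg hu hu0 hT hint).symm.trans_le
    ((hmin _ (hμP.densOn_lineMap hμ₁P hu hu0 hu₁ hu₁0 ht')).trans
      (FFnu_densOn_lineMap_le hf_nonneg hu hu0 hu₁ hu₁0 hT hT₁ ht' hint_t))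
  rw [ENNReal.ofReal_le_ofReal_iff (add_nonneg (add_nonneg
      (mul_nonneg (sub_nonneg.2 ht'.2) ENNReal.toReal_nonneg)
      (mul_nonneg ht'.1 ENNReal.toReal_nonneg))
    (integral_nonneg fun x => hf_nonneg _ (lineMap_nonneg (hu0 x) (hu₁0 x) ht')))] at h
  rw [integral_slope_comp_lineMap hint hint_t, le_div_iff₀ ht.1]
  linarith

end Minimizer

theorem statement_1_general {n : ℕ} (Ω : Set (Rn n))
    (p : ℝ) (f f' : ℝ → ℝ)
    (hf_nonneg : ∀ t : ℝ, 0 ≤ t → 0 ≤ f t)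
    (hf_sconv : StrictConvexOn ℝ (Ici 0) f)
    (hf_deriv : ∀ t ∈ Ici (0:ℝ), HasDerivWithinAt f (f' t) (Ici 0) t)
    (ν : Measure (Rn n))
    (u : Rn n → ℝ) (hu_meas : Measurable u) (hu_nonneg : ∀ x, 0 ≤ u x)
    (μ : Measure (Rn n)) (hμ : μ = densOn Ω u) (hμP : ProbOn Ω μ)
    (hmin : ∀ μ' : Measure (Rn n), ProbOn Ω μ' → FFnu p f Ω ν μ ≤ FFnu p f Ω ν μ')
    (hfin : FFnu p f Ω ν μ < ⊤)
    (u₁ : Rn n → ℝ) (hu₁_meas : Measurable u₁) (hu₁_nonneg : ∀ x, 0 ≤ u₁ x)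
    (μ₁ : Measure (Rn n)) (hμ₁ : μ₁ = densOn Ω u₁) (hμ₁P : ProbOn Ω μ₁)
    (hfin₁ : FFnu p f Ω ν μ₁ < ⊤) :
    0 ≤ (Tcost p μ₁ ν).toReal - (Tcost p μ ν).toReal
        + ∫ x in Ω, f' (u x) * (u₁ x - u x) := by
  subst hμ hμ₁
  have hf_conv : ConvexOn ℝ (Ici 0) f := hf_sconv.convexOn
  have hf_cont : ContinuousOn f (Ici 0) := fun t ht => (hf_deriv t ht).continuousWithinAt
  obtain ⟨hT, hF⟩ := ENNReal.add_ne_top.1 hfin.ne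
  obtain ⟨hT₁, hF₁⟩ := ENNReal.add_ne_top.1 hfin₁.ne
  have hint := integrable_of_Ffun_densOn_ne_top hf_nonneg hf_cont hu_meas hu_nonneg hF
  have hint₁ := integrable_of_Ffun_densOn_ne_top hf_nonneg hf_cont hu₁_meas hu₁_nonneg hF₁
  have h_lim := le_integral_of_antitone_of_tendsto
    (q := fun k x => slope (fun s : ℝ => f (AffineMap.lineMap (u x) (u₁ x) s)) 0 ((k : ℝ) + 1)⁻¹)
    (fun k => integrable_slope_comp_lineMap hint (integrable_comp_lineMap hf_nonneg hf_conv
      hf_cont hu_meas hu_nonneg hu₁_meas hu₁_nonneg hint hint₁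
      (Ioc_subset_Icc_self (inv_natCast_add_one_mem_Ioc k))))
    (.of_forall fun x =>
      (hf_conv.comp_lineMap (hu_nonneg x) (hu₁_nonneg x)).antitone_slope_inv_add_one)
    (.of_forall fun x => ((hf_deriv _ (hu_nonneg x)).comp_lineMap (convex_Ici 0) (hu_nonneg x)
      (hu₁_nonneg x)).tendsto_slope_inv_add_one)
    (fun k => toReal_Tcost_sub_le_integral_slope hf_nonneg hf_conv hf_cont hu_meas hu_nonneg
      hu₁_meas hu₁_nonneg hμP hμ₁P hmin hT hT₁ hint hint₁ (inv_natCast_add_one_mem_Ioc k))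
  linarith

/-- the variational inequality satisfied by a minimizer of `𝔉^p_ν`. -/
theorem statement_1 {n : ℕ} (Ω : Set (Rn n)) (hΩ : IsBoundedDomain Ω)
    (p : ℝ) (hp : 1 ≤ p) (f f' : ℝ → ℝ)
    (hf_nonneg : ∀ t : ℝ, 0 ≤ t → 0 ≤ f t) (hf0 : f 0 = 0)
    (hf_sconv : StrictConvexOn ℝ (Ici 0) f)
    (hf_deriv : ∀ t ∈ Ici (0:ℝ), HasDerivWithinAt f (f' t) (Ici 0) t)
    (hf'_cont : ContinuousOn f' (Ici 0)) (hf'0 : f' 0 = 0)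
    (hf_super : Tendsto (fun t => f t / t) atTop atTop)
    (ν : Measure (Rn n)) (hν : ProbOn Ω ν)
    (u : Rn n → ℝ) (hu_meas : Measurable u) (hu_nonneg : ∀ x, 0 ≤ u x)
    (μ : Measure (Rn n)) (hμ : μ = densOn Ω u) (hμP : ProbOn Ω μ)
    (hmin : ∀ μ' : Measure (Rn n), ProbOn Ω μ' → FFnu p f Ω ν μ ≤ FFnu p f Ω ν μ')
    (hfin : FFnu p f Ω ν μ < ⊤)
    (u₁ : Rn n → ℝ) (hu₁_meas : Measurable u₁) (hu₁_nonneg : ∀ x, 0 ≤ u₁ x)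
    (μ₁ : Measure (Rn n)) (hμ₁ : μ₁ = densOn Ω u₁) (hμ₁P : ProbOn Ω μ₁)
    (hfin₁ : FFnu p f Ω ν μ₁ < ⊤) :
    0 ≤ (Tcost p μ₁ ν).toReal - (Tcost p μ ν).toReal
        + ∫ x in Ω, f' (u x) * (u₁ x - u x) :=
  statement_1_general Ω p f f' hf_nonneg hf_sconv hf_deriv ν u hu_meas hu_nonneg μ hμ hμP hmin hfin
    u₁ hu₁_meas hu₁_nonneg μ₁ hμ₁ hμ₁P hfin₁
end

section
/- Let Ω ⊂ ℝ^n be a bounded domain and p ≥ 1. Suppose ν = ν^s + v·ℒ^n, where ν^s is singular with respect to Lebesgue measure, v ∈ L^∞(Ω), and v > 0 almost everywhere in Ω. If μ = u·ℒ^n minimizes 𝔉^p_ν over probability measures on Ω, then u > 0 almost everywhere in Ω. -/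
open MeasureTheory Set Filter Topology Metric
open scoped ENNReal NNReal

/-!
Suppose `u = 0` on a set of positive measure where `v > 0`, and take a compact `K` there which
the singular part `νs` does not charge. Then `μ K = 0 < ν K`, so for some `r > 0` the closed
`r`-neighbourhood of `K` carries less `μ`-mass than `ν K`: every transport plan moves a fixed
amount of mass into `K` over distances at least `r`, at cost at least `c₀ > 0`. Leaving the
fraction `ε` of the mass arriving in `K` where it is lowers the transport cost by `ε c₀`, while
the density only grows on `K`, where it becomes at most `ε C`; so `F` increases by at most
`f (ε C) |K| = o(ε)` (as `f' 0 = 0`), and for small `ε` the competitor beats the minimizer.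
-/

namespace MeasureTheory.Measure

variable {α : Type*} [MeasurableSpace α]

/-- Keeps the fraction `1 - ε` of the mass that `γ` sends into `K` and lets the fraction `ε`
stay in place, on the diagonal. -/
noncomputable def transferToDiagonal (γ : Measure (α × α)) (K : Set α) (ε : ℝ≥0∞) :
    Measure (α × α) :=
  γ.restrict (Prod.snd ⁻¹' Kᶜ) + (1 - ε) • γ.restrict (Prod.snd ⁻¹' K)
    + ε • ((γ.map Prod.snd).restrict K).map Function.diag

variable {γ : Measure (α × α)} {K : Set α} {ε : ℝ≥0∞}

theorem map_snd_transferToDiagonal (hK : MeasurableSet K) (hε : ε ≤ 1) :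
    (γ.transferToDiagonal K ε).map Prod.snd = γ.map Prod.snd := by
  rw [transferToDiagonal, Measure.map_add _ _ measurable_snd, Measure.map_add _ _ measurable_snd,
    Measure.map_smul, Measure.map_smul, map_map measurable_snd measurable_diag,
    Function.snd_comp_diag, map_id, ← restrict_map measurable_snd hK.compl,
    ← restrict_map measurable_snd hK, add_assoc, ← add_smul, tsub_add_cancel_of_le hε, one_smul,
    add_comm, restrict_add_restrict_compl hK]

theorem map_fst_transferToDiagonal_le (hK : MeasurableSet K) :
    (γ.transferToDiagonal K ε).map Prod.fst
      ≤ γ.map Prod.fst + ε • (γ.map Prod.snd).restrict K := by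
  rw [transferToDiagonal, Measure.map_add _ _ measurable_fst, Measure.map_add _ _ measurable_fst,
    Measure.map_smul, Measure.map_smul, map_map measurable_fst measurable_diag,
    Function.fst_comp_diag, map_id]
  gcongr
  calc (γ.restrict (Prod.snd ⁻¹' Kᶜ)).map Prod.fst
        + (1 - ε) • (γ.restrict (Prod.snd ⁻¹' K)).map Prod.fst
      ≤ (γ.restrict (Prod.snd ⁻¹' Kᶜ)).map Prod.fst
        + (γ.restrict (Prod.snd ⁻¹' K)).map Prod.fst := by
        gcongr
        exact Measure.le_iff'.2 fun s => mul_le_of_le_one_left zero_le tsub_le_self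
    _ = γ.map Prod.fst := by
        rw [← Measure.map_add _ _ measurable_fst, add_comm, preimage_compl,
          restrict_add_restrict_compl (measurable_snd hK)]

theorem lintegral_transferToDiagonal_add (hK : MeasurableSet K) (hε : ε ≤ 1)
    {c : α × α → ℝ≥0∞} (hc : Measurable c) (hc_diag : ∀ y, c (y, y) = 0) :
    ∫⁻ z, c z ∂(γ.transferToDiagonal K ε) + ε * ∫⁻ z in Prod.snd ⁻¹' K, c z ∂γ
      = ∫⁻ z, c z ∂γ := by
  rw [transferToDiagonal, lintegral_add_measure, lintegral_add_measure, lintegral_smul_measure,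
    lintegral_smul_measure, lintegral_map hc measurable_diag]
  simp only [Function.diag, hc_diag, lintegral_zero, smul_eq_mul, mul_zero, add_zero]
  rw [add_assoc, ← add_mul, tsub_add_cancel_of_le hε, one_mul, add_comm,
    preimage_compl, lintegral_add_compl _ (measurable_snd hK)]

theorem rnDeriv_le_of_le_withDensity {μ ν : Measure α} [SigmaFinite μ] [SigmaFinite ν]
    {g : α → ℝ≥0∞} (h : μ ≤ ν.withDensity g) : μ.rnDeriv ν ≤ᵐ[ν] g := by
  have hac : μ ≪ ν := (absolutelyContinuous_of_le h).trans (withDensity_absolutelyContinuous ν g)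
  refine ae_le_of_forall_setLIntegral_le_of_sigmaFinite (measurable_rnDeriv μ ν) fun s hs _ => ?_
  rw [setLIntegral_rnDeriv hac, ← withDensity_apply _ hs]
  exact h s

end MeasureTheory.Measure

section

variable {n : ℕ}

theorem measurable_ofReal_norm_sub_rpow {p : ℝ} (hp : 0 ≤ p) :
    Measurable fun z : Rn n × Rn n => ENNReal.ofReal (‖z.1 - z.2‖ ^ p) :=
  ((continuous_fst.sub continuous_snd).norm.rpow_const fun _ => Or.inr hp).measurable.ennreal_ofReal

theorem Tcost_le_lintegral {p : ℝ} {μ ν : Measure (Rn n)} {γ : Measure (Rn n × Rn n)}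
    (hγ : γ ∈ Couplings μ ν) : Tcost p μ ν ≤ ∫⁻ z, ENNReal.ofReal (‖z.1 - z.2‖ ^ p) ∂γ :=
  iInf₂_le γ hγ

theorem Tcost_lt_top {p : ℝ} (hp : 0 ≤ p) {Ω : Set (Rn n)} (hΩ : Bornology.IsBounded Ω)
    {μ ν : Measure (Rn n)} (hμ : ProbOn Ω μ) (hν : ProbOn Ω ν) :
    Tcost p μ ν < ⊤ := by
  have := hμ.1; have := hν.1
  obtain ⟨R, hR⟩ := hΩ.subset_closedBall 0
  have hprod : μ.prod ν ∈ Couplings μ ν := ⟨inferInstance, by simp, by simp⟩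
  have hnull : μ.prod ν (Ω ×ˢ Ω)ᶜ = 0 := by
    rw [compl_prod_eq_union]
    exact measure_union_null (by simp [hμ.2]) (by simp [hν.2])
  have hbound : ∀ᵐ z ∂μ.prod ν,
      ENNReal.ofReal (‖z.1 - z.2‖ ^ p) ≤ ENNReal.ofReal ((2 * R) ^ p) := by
    filter_upwards [measure_eq_zero_iff_ae_notMem.1 hnull] with z hz
    rw [notMem_compl_iff] at hz
    have h1 := mem_closedBall_zero_iff.1 (hR hz.1)
    have h2 := mem_closedBall_zero_iff.1 (hR hz.2)
    gcongr
    linarith [norm_sub_le z.1 z.2]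
  calc Tcost p μ ν ≤ ∫⁻ z, ENNReal.ofReal (‖z.1 - z.2‖ ^ p) ∂μ.prod ν := Tcost_le_lintegral hprod
    _ ≤ ∫⁻ _, ENNReal.ofReal ((2 * R) ^ p) ∂μ.prod ν := lintegral_mono_ae hbound
    _ < ⊤ := by simp

/-- The part of a plan `γ` arriving in `K` must cover the distance `r` for all the mass of `K`
that is not already present within distance `r` of `K`. -/
theorem ofReal_rpow_mul_le_setLIntegral_cost {p r : ℝ} (hp : 0 ≤ p) (hr : 0 ≤ r)
    {μ ν : Measure (Rn n)} {γ : Measure (Rn n × Rn n)} (hγ : γ ∈ Couplings μ ν)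
    {K : Set (Rn n)} (hK : MeasurableSet K) :
    ENNReal.ofReal (r ^ p) * (ν K - μ (cthickening r K))
      ≤ ∫⁻ z in Prod.snd ⁻¹' K, ENNReal.ofReal (‖z.1 - z.2‖ ^ p) ∂γ := by
  obtain ⟨-, hγμ, hγν⟩ := hγ
  set E := Prod.snd ⁻¹' K
  set G := {z : Rn n × Rn n | r ≤ ‖z.1 - z.2‖}
  have hnear : ν K - μ (cthickening r K) ≤ γ (E ∩ G) := by
    have hsub : E \ G ⊆ Prod.fst ⁻¹' cthickening r K := fun z hz =>
      mem_cthickening_of_dist_le _ _ _ _ hz.1 (by simpa [G, dist_eq_norm] using (not_le.1 hz.2).le)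
    rw [tsub_le_iff_right, ← hγν, ← hγμ, Measure.map_apply measurable_snd hK,
      Measure.map_apply measurable_fst isClosed_cthickening.measurableSet]
    exact (measure_le_inter_add_sdiff γ E G).trans (add_le_add le_rfl (measure_mono hsub))
  calc ENNReal.ofReal (r ^ p) * (ν K - μ (cthickening r K))
      ≤ ENNReal.ofReal (r ^ p) * γ (E ∩ G) := by gcongr
    _ = ∫⁻ _ in E ∩ G, ENNReal.ofReal (r ^ p) ∂γ := (setLIntegral_const _ _).symm
    _ ≤ ∫⁻ z in E ∩ G, ENNReal.ofReal (‖z.1 - z.2‖ ^ p) ∂γ :=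
        setLIntegral_mono (measurable_ofReal_norm_sub_rpow hp) fun z hz => by
          gcongr; exact hz.2
    _ ≤ ∫⁻ z in E, ENNReal.ofReal (‖z.1 - z.2‖ ^ p) ∂γ := lintegral_mono_set inter_subset_left

theorem transferToDiagonal_mem_couplings {μ ν : Measure (Rn n)} {γ : Measure (Rn n × Rn n)}
    (hγ : γ ∈ Couplings μ ν) {K : Set (Rn n)} (hK : MeasurableSet K) {ε : ℝ≥0∞} (hε : ε ≤ 1) :
    γ.transferToDiagonal K ε ∈ Couplings ((γ.transferToDiagonal K ε).map Prod.fst) ν := by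
  obtain ⟨hγP, -, hγν⟩ := hγ
  have hsnd := Measure.map_snd_transferToDiagonal (γ := γ) hK hε
  refine ⟨⟨?_⟩, rfl, hsnd.trans hγν⟩
  simpa [Measure.map_apply measurable_snd MeasurableSet.univ] using congrArg (· univ) hsnd

theorem ConvexOn.monotoneOn_Ici_of_nonneg {f : ℝ → ℝ} (hf : ConvexOn ℝ (Ici 0) f)
    (hf0 : f 0 = 0) (hf_nonneg : ∀ t, 0 ≤ t → 0 ≤ f t) : MonotoneOn f (Ici 0) := by
  intro a (ha : 0 ≤ a) b (hb : 0 ≤ b) hab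
  rcases ha.eq_or_lt with rfl | ha
  · rw [hf0]; exact hf_nonneg b hb
  have hb' : 0 < b := ha.trans_le hab
  have hcomb : (1 - a / b) • (0 : ℝ) + (a / b) • b = a := by
    simp [div_mul_cancel₀ a hb'.ne']
  have := hf.le_right_of_left_le' self_mem_Ici hb (sub_nonneg.2 ((div_le_one hb').2 hab))
    (div_pos ha hb') (by ring) (by rw [hcomb, hf0]; exact hf_nonneg a ha.le)
  rwa [hcomb] at this

theorem Ffun_densOn_s2 {f : ℝ → ℝ} {Ω : Set (Rn n)} (hΩ : MeasurableSet Ω) {u : Rn n → ℝ}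
    (hu : Measurable u) (hu_nonneg : ∀ x, 0 ≤ u x) :
    Ffun f Ω (densOn Ω u) = ∫⁻ x in Ω, ENNReal.ofReal (f (u x)) := by
  have hdens : densOn Ω u = volume.withDensity (Ω.indicator fun x => ENNReal.ofReal (u x)) := by
    rw [densOn, withDensity_indicator hΩ]
  have hrn := Measure.rnDeriv_withDensity volume (hu.ennreal_ofReal.indicator hΩ)
  rw [Ffun, if_pos (hdens ▸ withDensity_absolutelyContinuous _ _), hdens]
  refine setLIntegral_congr_fun_ae hΩ ?_
  filter_upwards [hrn] with x hx hxΩ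
  rw [hx, indicator_of_mem hxΩ, ENNReal.toReal_ofReal (hu_nonneg x)]

theorem Ffun_le_of_le_withDensity {f : ℝ → ℝ} (hf : MonotoneOn f (Ici 0)) {Ω : Set (Rn n)}
    (hΩ : MeasurableSet Ω) {g : Rn n → ℝ≥0∞} (hg : ∀ x, g x ≠ ⊤) {μ : Measure (Rn n)}
    [IsFiniteMeasure μ] (hμ : μ ≤ (volume.restrict Ω).withDensity g) :
    Ffun f Ω μ ≤ ∫⁻ x in Ω, ENNReal.ofReal (f (g x).toReal) := by
  rw [← withDensity_indicator hΩ] at hμ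
  have hac : μ ≪ volume :=
    (Measure.absolutelyContinuous_of_le hμ).trans (withDensity_absolutelyContinuous _ _)
  rw [Ffun, if_pos hac]
  refine setLIntegral_mono_ae' hΩ ?_
  filter_upwards [Measure.rnDeriv_le_of_le_withDensity hμ] with x hx hxΩ
  rw [indicator_of_mem hxΩ] at hx
  exact ENNReal.ofReal_le_ofReal
    (hf ENNReal.toReal_nonneg ENNReal.toReal_nonneg (ENNReal.toReal_mono (hg x) hx))

theorem Ffun_le_of_le_densOn_add_smul_restrict {f : ℝ → ℝ} (hf : MonotoneOn f (Ici 0))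
    {Ω K : Set (Rn n)} (hΩ : MeasurableSet Ω) (hK : MeasurableSet K) (hKΩ : K ⊆ Ω)
    {u v : Rn n → ℝ} (hu : Measurable u) (hu_nonneg : ∀ x, 0 ≤ u x) (hv : Measurable v)
    {C e : ℝ} (he : 0 ≤ e) (hKu : ∀ x ∈ K, u x ≤ 0) (hKv : ∀ x ∈ K, v x ∈ Icc 0 C)
    {μ : Measure (Rn n)} [IsFiniteMeasure μ]
    (hμ : μ ≤ densOn Ω u + ENNReal.ofReal e • (densOn Ω v).restrict K) :
    Ffun f Ω μ ≤ Ffun f Ω (densOn Ω u) + ENNReal.ofReal (f (e * C)) * volume K := by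
  set g : Rn n → ℝ≥0∞ := fun x =>
    ENNReal.ofReal (u x) + ENNReal.ofReal e * K.indicator (fun x => ENNReal.ofReal (v x)) x
  have hg : densOn Ω u + ENNReal.ofReal e • (densOn Ω v).restrict K
      = (volume.restrict Ω).withDensity g := by
    rw [densOn, densOn, restrict_withDensity hK, ← withDensity_indicator hK,
      ← withDensity_smul _ (hv.ennreal_ofReal.indicator hK),
      ← withDensity_add_left hu.ennreal_ofReal]
    rfl
  have hg_fin : ∀ x, g x ≠ ⊤ := fun x => by
    by_cases hx : x ∈ K <;> simp [g, hx, ENNReal.mul_eq_top]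
  have hpt : ∀ x ∈ Ω, ENNReal.ofReal (f (g x).toReal)
      ≤ ENNReal.ofReal (f (u x)) + K.indicator (fun _ => ENNReal.ofReal (f (e * C))) x := by
    intro x _
    by_cases hxK : x ∈ K
    · obtain ⟨hv0, hvC⟩ := hKv x hxK
      have hgx : (g x).toReal = e * v x := by
        simp [g, hxK, ENNReal.ofReal_of_nonpos (hKu x hxK), ENNReal.toReal_ofReal he,
          ENNReal.toReal_ofReal hv0]
      rw [indicator_of_mem hxK, hgx]
      refine le_add_left (ENNReal.ofReal_le_ofReal (hf ?_ ?_ (by gcongr)))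
      · exact mul_nonneg he hv0
      · exact mul_nonneg he (hv0.trans hvC)
    · simp [g, hxK, ENNReal.toReal_ofReal (hu_nonneg x)]
  calc Ffun f Ω μ ≤ ∫⁻ x in Ω, ENNReal.ofReal (f (g x).toReal) :=
        Ffun_le_of_le_withDensity hf hΩ hg_fin (hg ▸ hμ)
    _ ≤ ∫⁻ x in Ω, ENNReal.ofReal (f (u x)) + K.indicator (fun _ => ENNReal.ofReal (f (e * C))) x :=
        setLIntegral_mono' hΩ hpt
    _ = Ffun f Ω (densOn Ω u) + ENNReal.ofReal (f (e * C)) * volume K := by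
        rw [lintegral_add_right _ (measurable_const.indicator hK), lintegral_indicator_const hK,
          Measure.restrict_apply hK, inter_eq_left.2 hKΩ, Ffun_densOn_s2 hΩ hu hu_nonneg]

theorem exists_pos_measure_cthickening_lt {α : Type*} [PseudoEMetricSpace α] [MeasurableSpace α]
    [OpensMeasurableSpace α] {μ : Measure α} [IsFiniteMeasure μ] {K : Set α} (hK : IsClosed K)
    {a : ℝ≥0∞} (h : μ K < a) : ∃ r > 0, μ (cthickening r K) < a :=
  ((tendsto_measure_cthickening_of_isClosed ⟨1, one_pos, measure_ne_top _ _⟩ hK).eventually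
    (gt_mem_nhds h) |>.filter_mono (nhdsWithin_le_nhds (s := Ioi 0)) |>.and
    self_mem_nhdsWithin).exists.imp fun _ h => ⟨h.2, h.1⟩

theorem exists_isCompact_subset_of_not_ae_pos {α : Type*} [TopologicalSpace α]
    [MeasurableSpace α] {μ : Measure α} [μ.InnerRegular] {Ω S : Set α} (hΩ : MeasurableSet Ω)
    (hS : MeasurableSet S) (hS_ae : ∀ᵐ x ∂μ.restrict Ω, x ∈ S) {u : α → ℝ} (hu : Measurable u)
    (h : ¬∀ᵐ x ∂μ.restrict Ω, 0 < u x) :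
    ∃ K ⊆ Ω ∩ S ∩ u ⁻¹' Iic 0, IsCompact K ∧ 0 < μ K := by
  have hfreq := (not_eventually.1 h).and_eventually (hS_ae.and (ae_restrict_mem hΩ))
  rw [frequently_ae_iff, ← pos_iff_ne_zero] at hfreq
  refine (hΩ.inter hS |>.inter (hu measurableSet_Iic)).exists_lt_isCompact
    (hfreq.trans_le ((Measure.restrict_apply_le _ _).trans (measure_mono ?_)))
  rintro x ⟨hu0, hxS, hxΩ⟩
  exact ⟨⟨hxΩ, hxS⟩, not_lt.1 hu0⟩

theorem exists_isCompact_nonpos_restrict_eq_densOn {Ω : Set (Rn n)} (hΩ : MeasurableSet Ω)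
    {u v : Rn n → ℝ} (hu : Measurable u) (hv : Measurable v) {C : ℝ}
    (hv_bdd : ∀ᵐ x ∂(volume.restrict Ω), v x ≤ C) (hv_pos : ∀ᵐ x ∂(volume.restrict Ω), 0 < v x)
    {νs : Measure (Rn n)} (hνs : νs ⟂ₘ volume) (hu_pos : ¬∀ᵐ x ∂(volume.restrict Ω), 0 < u x) :
    ∃ K ⊆ Ω, IsCompact K ∧ 0 < volume K ∧ (∀ x ∈ K, u x ≤ 0) ∧ (∀ x ∈ K, v x ∈ Ioc 0 C) ∧
      (νs + densOn Ω v).restrict K = (densOn Ω v).restrict K := by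
  obtain ⟨s, hs, hνs_s, hsc⟩ := hνs
  have hS_ae : ∀ᵐ x ∂volume.restrict Ω, x ∈ s ∩ v ⁻¹' Ioc 0 C := by
    filter_upwards [ae_restrict_of_ae (compl_mem_ae_iff.2 hsc), hv_pos, hv_bdd] with x hxs h0 hC
    exact ⟨notMem_compl_iff.1 hxs, h0, hC⟩
  obtain ⟨K, hKsub, hKc, hKpos⟩ := exists_isCompact_subset_of_not_ae_pos hΩ
    (hs.inter (hv measurableSet_Ioc)) hS_ae hu hu_pos
  refine ⟨K, fun x hx => (hKsub hx).1.1, hKc, hKpos, fun x hx => (hKsub hx).2,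
    fun x hx => (hKsub hx).1.2.2, ?_⟩
  rw [Measure.restrict_add,
    Measure.restrict_eq_zero.2 (measure_mono_null (fun x hx => (hKsub hx).1.2.1) hνs_s), zero_add]

theorem densOn_apply_eq_zero {Ω K : Set (Rn n)} (hK : MeasurableSet K) {u : Rn n → ℝ}
    (hKu : ∀ x ∈ K, u x ≤ 0) : densOn Ω u K = 0 := by
  rw [densOn, withDensity_apply _ hK,
    setLIntegral_congr_fun hK fun x hx => ENNReal.ofReal_of_nonpos (hKu x hx)]
  simp

theorem densOn_apply_pos {Ω K : Set (Rn n)} (hK : MeasurableSet K) (hKΩ : K ⊆ Ω)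
    {v : Rn n → ℝ} (hv : Measurable v) (hKv : ∀ x ∈ K, 0 < v x) (hKpos : 0 < volume K) :
    0 < densOn Ω v K := by
  rw [densOn, withDensity_apply _ hK, Measure.restrict_restrict hK,
    inter_eq_left.2 hKΩ, setLIntegral_pos_iff hv.ennreal_ofReal,
    inter_eq_right.2 fun x hx => Function.mem_support.2 (ENNReal.ofReal_pos.2 (hKv x hx)).ne']
  exact hKpos

theorem IsBoundedDomain.isClosed {Ω : Set (Rn n)} (hΩ : IsBoundedDomain Ω) : IsClosed Ω := by
  obtain ⟨U, -, -, -, -, rfl, -⟩ := hΩ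
  exact isClosed_closure

theorem IsBoundedDomain.isBounded {Ω : Set (Rn n)} (hΩ : IsBoundedDomain Ω) :
    Bornology.IsBounded Ω := by
  obtain ⟨U, -, -, -, hU, rfl, -⟩ := hΩ
  exact hU.closure

theorem IsBoundedDomain.volume_pos {Ω : Set (Rn n)} (hΩ : IsBoundedDomain Ω) : 0 < volume Ω := by
  obtain ⟨U, hU, hUne, -, -, rfl, -⟩ := hΩ
  exact (hU.measure_pos volume hUne).trans_le (measure_mono subset_closure)

/-- The uniform distribution on `Ω` has finite energy. -/
theorem exists_probOn_FFnu_lt_top {p : ℝ} (hp : 0 ≤ p) (f : ℝ → ℝ) {Ω : Set (Rn n)}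
    (hΩ : IsBoundedDomain Ω) {ν : Measure (Rn n)} (hν : ProbOn Ω ν) :
    ∃ μ, ProbOn Ω μ ∧ FFnu p f Ω ν μ < ⊤ := by
  have hΩm := hΩ.isClosed.measurableSet
  have hΩfin := hΩ.isBounded.measure_lt_top (μ := volume)
  set c := (volume Ω).toReal⁻¹
  have hc : 0 < c := inv_pos.2 (ENNReal.toReal_pos hΩ.volume_pos.ne' hΩfin.ne)
  have hμ : ProbOn Ω (densOn Ω fun _ => c) := by
    refine ⟨⟨?_⟩, withDensity_absolutelyContinuous _ _ (by simp [Measure.restrict_apply hΩm.compl])⟩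
    rw [densOn, withDensity_apply _ MeasurableSet.univ, Measure.restrict_univ, setLIntegral_const,
      ENNReal.ofReal_inv_of_pos (ENNReal.toReal_pos hΩ.volume_pos.ne' hΩfin.ne),
      ENNReal.ofReal_toReal hΩfin.ne, ENNReal.inv_mul_cancel hΩ.volume_pos.ne' hΩfin.ne]
  refine ⟨_, hμ, ENNReal.add_lt_top.2 ⟨Tcost_lt_top hp hΩ.isBounded hμ hν, ?_⟩⟩
  rw [Ffun_densOn_s2 hΩm measurable_const fun _ => hc.le, setLIntegral_const]
  exact ENNReal.mul_lt_top ENNReal.ofReal_lt_top hΩfin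

theorem exists_competitor_of_mem_couplings {p : ℝ} (hp : 0 < p) {Ω K : Set (Rn n)}
    (hK : MeasurableSet K) {μ ν : Measure (Rn n)} (hμ : ProbOn Ω μ) (hν : ProbOn Ω ν)
    {γ : Measure (Rn n × Rn n)} (hγ : γ ∈ Couplings μ ν) {ε : ℝ≥0∞} (hε : ε ≤ 1) :
    ∃ μ', ProbOn Ω μ' ∧ μ' ≤ μ + ε • ν.restrict K ∧
      Tcost p μ' ν + ε * ∫⁻ z in Prod.snd ⁻¹' K, ENNReal.ofReal (‖z.1 - z.2‖ ^ p) ∂γ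
        ≤ ∫⁻ z, ENNReal.ofReal (‖z.1 - z.2‖ ^ p) ∂γ := by
  have hγ' := transferToDiagonal_mem_couplings hγ hK hε
  have hle : (γ.transferToDiagonal K ε).map Prod.fst ≤ μ + ε • ν.restrict K := by
    simpa only [hγ.2.1, hγ.2.2] using Measure.map_fst_transferToDiagonal_le (γ := γ) (ε := ε) hK
  have := hγ'.1
  have hνK : ν.restrict K Ωᶜ = 0 := nonpos_iff_eq_zero.1 (hν.2 ▸ Measure.restrict_le_self Ωᶜ)
  refine ⟨_, ⟨Measure.isProbabilityMeasure_map measurable_fst.aemeasurable, ?_⟩, hle, ?_⟩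
  · exact nonpos_iff_eq_zero.1 ((hle Ωᶜ).trans (by simp [hμ.2, hνK]))
  calc _ ≤ ∫⁻ z, ENNReal.ofReal (‖z.1 - z.2‖ ^ p) ∂(γ.transferToDiagonal K ε)
        + ε * ∫⁻ z in Prod.snd ⁻¹' K, ENNReal.ofReal (‖z.1 - z.2‖ ^ p) ∂γ := by
        gcongr; exact Tcost_le_lintegral hγ'
    _ = _ := Measure.lintegral_transferToDiagonal_add hK hε (measurable_ofReal_norm_sub_rpow hp.le)
        fun y => by simp [Real.zero_rpow hp.ne']

theorem le_of_forall_couplings_exists_FFnu_add_le {p : ℝ} {f : ℝ → ℝ} {Ω : Set (Rn n)}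
    {μ ν : Measure (Rn n)} (hmin : ∀ μ', ProbOn Ω μ' → FFnu p f Ω ν μ ≤ FFnu p f Ω ν μ')
    (hfin : FFnu p f Ω ν μ ≠ ⊤) {a b : ℝ≥0∞}
    (h : ∀ γ ∈ Couplings μ ν, ∃ μ', ProbOn Ω μ' ∧
      FFnu p f Ω ν μ' + a ≤ ∫⁻ z, ENNReal.ofReal (‖z.1 - z.2‖ ^ p) ∂γ + Ffun f Ω μ + b) :
    a ≤ b := by
  refine (ENNReal.add_le_add_iff_left hfin).1 ?_
  calc FFnu p f Ω ν μ + a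
      ≤ ⨅ γ ∈ Couplings μ ν, ∫⁻ z, ENNReal.ofReal (‖z.1 - z.2‖ ^ p) ∂γ + Ffun f Ω μ + b :=
        le_iInf₂ fun γ hγ => by
          obtain ⟨μ', hμ', hle⟩ := h γ hγ
          exact (add_le_add_left (hmin μ' hμ') a).trans hle
    _ = FFnu p f Ω ν μ + b := by simp only [FFnu, Tcost, add_assoc, ENNReal.iInf_add]

/-- The competitor `(γ.transferToDiagonal K e).map Prod.fst` saves `e` times the transport cost
of `ofReal_rpow_mul_le_setLIntegral_cost` and costs at most `f (e * C) * |K|` in `F`. -/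
theorem ofReal_mul_le_of_isMinimizer {p : ℝ} (hp : 0 < p) {f : ℝ → ℝ}
    (hf : MonotoneOn f (Ici 0)) {Ω K : Set (Rn n)} (hΩ : MeasurableSet Ω) (hK : MeasurableSet K)
    (hKΩ : K ⊆ Ω) {u v : Rn n → ℝ} (hu : Measurable u) (hu_nonneg : ∀ x, 0 ≤ u x)
    (hv : Measurable v) {C : ℝ} (hKu : ∀ x ∈ K, u x ≤ 0) (hKv : ∀ x ∈ K, v x ∈ Icc 0 C)
    {ν : Measure (Rn n)} (hμP : ProbOn Ω (densOn Ω u)) (hνP : ProbOn Ω ν)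
    (hνK : ν.restrict K = (densOn Ω v).restrict K)
    (hmin : ∀ μ', ProbOn Ω μ' → FFnu p f Ω ν (densOn Ω u) ≤ FFnu p f Ω ν μ')
    (hfin : FFnu p f Ω ν (densOn Ω u) ≠ ⊤) {r e : ℝ} (hr : 0 ≤ r) (he : e ∈ Icc 0 1) :
    ENNReal.ofReal e * (ENNReal.ofReal (r ^ p) * (ν K - densOn Ω u (cthickening r K)))
      ≤ ENNReal.ofReal (f (e * C)) * volume K := by
  refine le_of_forall_couplings_exists_FFnu_add_le hmin hfin fun γ hγ => ?_
  obtain ⟨μ', hμ'P, hμ'le, hT⟩ :=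
    exists_competitor_of_mem_couplings hp hK hμP hνP hγ (ENNReal.ofReal_le_one.2 he.2)
  have := hμ'P.1
  have hF := Ffun_le_of_le_densOn_add_smul_restrict hf hΩ hK hKΩ hu hu_nonneg hv he.1 hKu hKv
    (hνK ▸ hμ'le)
  refine ⟨μ', hμ'P, ?_⟩
  calc FFnu p f Ω ν μ' + ENNReal.ofReal e * _
      ≤ Tcost p μ' ν + ENNReal.ofReal e
          * ∫⁻ z in Prod.snd ⁻¹' K, ENNReal.ofReal (‖z.1 - z.2‖ ^ p) ∂γ + Ffun f Ω μ' := by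
        rw [FFnu, add_right_comm]
        gcongr
        exact ofReal_rpow_mul_le_setLIntegral_cost hp.le hr hγ hK
    _ ≤ _ := (add_le_add hT hF).trans_eq (add_assoc _ _ _).symm

theorem tendsto_div_self_nhdsGT_zero {f : ℝ → ℝ} (hf0 : f 0 = 0)
    (hf : HasDerivWithinAt f 0 (Ici 0) 0) : Tendsto (fun t => f t / t) (𝓝[>] 0) (𝓝 0) := by
  refine ((hasDerivWithinAt_iff_tendsto_slope' (lt_irrefl 0)).1 hf.Ioi_of_Ici).congr fun t => ?_
  simp [slope_def_field, hf0]

theorem exists_ofReal_mul_lt_of_tendsto_div_self {f : ℝ → ℝ}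
    (hf : Tendsto (fun t => f t / t) (𝓝[>] 0) (𝓝 0)) {C : ℝ} (hC : 0 < C) {a b : ℝ≥0∞}
    (ha : a ≠ 0) (hb : b ≠ ⊤) :
    ∃ e ∈ Icc (0 : ℝ) 1, ENNReal.ofReal (f (e * C)) * b < ENNReal.ofReal e * a := by
  obtain ⟨η, -, hη, hηab⟩ := ENNReal.lt_iff_exists_real_btwn.1 (ENNReal.div_pos ha hb)
  have hη' : 0 < η := ENNReal.ofReal_pos.1 hη
  have hscale : Tendsto (fun e : ℝ => e * C) (𝓝[>] 0) (𝓝[>] 0) :=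
    tendsto_nhdsWithin_of_tendsto_nhds_of_eventually_within _
      ((continuous_mul_const C).tendsto' 0 0 (zero_mul C) |>.mono_left nhdsWithin_le_nhds)
      (eventually_nhdsWithin_of_forall fun e (he : 0 < e) => mul_pos he hC)
  obtain ⟨e, he_slope : f (e * C) / (e * C) < η / C, he1, he0 : 0 < e⟩ :=
    ((hf.comp hscale).eventually (gt_mem_nhds (div_pos hη' hC)) |>.and
      ((eventually_le_nhds one_pos).filter_mono nhdsWithin_le_nhds |>.and
        self_mem_nhdsWithin)).exists
  have hfe : f (e * C) ≤ e * η := by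
    calc f (e * C) ≤ η / C * (e * C) := ((div_lt_iff₀ (mul_pos he0 hC)).1 he_slope).le
      _ = e * η := by field_simp
  refine ⟨e, ⟨he0.le, he1⟩, ?_⟩
  calc ENNReal.ofReal (f (e * C)) * b ≤ ENNReal.ofReal e * (ENNReal.ofReal η * b) := by
        rw [← mul_assoc, ← ENNReal.ofReal_mul he0.le]; gcongr
    _ < ENNReal.ofReal e * a := by
        gcongr
        · exact ENNReal.ofReal_ne_top
        · exact ENNReal.mul_lt_of_lt_div hηab

end

theorem statement_2_general {n : ℕ} (Ω : Set (Rn n)) (hΩ : IsBoundedDomain Ω)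
    (p : ℝ) (hp : 1 ≤ p) (f f' : ℝ → ℝ)
    (hf_nonneg : ∀ t : ℝ, 0 ≤ t → 0 ≤ f t) (hf0 : f 0 = 0)
    (hf_sconv : StrictConvexOn ℝ (Ici 0) f)
    (hf_deriv : ∀ t ∈ Ici (0:ℝ), HasDerivWithinAt f (f' t) (Ici 0) t)
    (hf'0 : f' 0 = 0)
    (νs : Measure (Rn n)) (hνs : νs ⟂ₘ (volume : Measure (Rn n)))
    (v : Rn n → ℝ) (hv_meas : Measurable v)
    (C : ℝ) (hv_bdd : ∀ᵐ x ∂(volume.restrict Ω), v x ≤ C)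
    (hv_pos : ∀ᵐ x ∂(volume.restrict Ω), 0 < v x)
    (ν : Measure (Rn n)) (hν : ν = νs + densOn Ω v) (hνP : ProbOn Ω ν)
    (u : Rn n → ℝ) (hu_meas : Measurable u) (hu_nonneg : ∀ x, 0 ≤ u x)
    (μ : Measure (Rn n)) (hμ : μ = densOn Ω u) (hμP : ProbOn Ω μ)
    (hmin : ∀ μ' : Measure (Rn n), ProbOn Ω μ' → FFnu p f Ω ν μ ≤ FFnu p f Ω ν μ') :
    ∀ᵐ x ∂(volume.restrict Ω), 0 < u x := by
  subst hμ hν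
  have := hμP.1
  have hΩm := hΩ.isClosed.measurableSet
  have hp0 : 0 < p := zero_lt_one.trans_le hp
  by_contra hcon
  obtain ⟨K, hKΩ, hKc, hKpos, hKu, hKv, hνK⟩ := exists_isCompact_nonpos_restrict_eq_densOn hΩm
    hu_meas hv_meas hv_bdd hv_pos hνs hcon
  have hK := hKc.isClosed.measurableSet
  have hνK_pos : 0 < (νs + densOn Ω v) K :=
    (densOn_apply_pos hK hKΩ hv_meas (fun x hx => (hKv x hx).1) hKpos).trans_le
      (Measure.le_add_left le_rfl K)
  obtain ⟨r, hr, hr_lt⟩ := exists_pos_measure_cthickening_lt hKc.isClosed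
    ((densOn_apply_eq_zero (Ω := Ω) hK hKu).trans_lt hνK_pos)
  obtain ⟨x, hx⟩ := nonempty_of_measure_ne_zero hKpos.ne'
  obtain ⟨e, he, hlt⟩ := exists_ofReal_mul_lt_of_tendsto_div_self
    (tendsto_div_self_nhdsGT_zero hf0 (hf'0 ▸ hf_deriv 0 self_mem_Ici :))
    ((hKv x hx).1.trans_le (hKv x hx).2)
    (ENNReal.mul_pos (ENNReal.ofReal_pos.2 (Real.rpow_pos_of_pos hr p)).ne'
      (tsub_pos_of_lt hr_lt).ne').ne'
    (hKc.measure_lt_top (μ := volume)).ne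
  obtain ⟨μ₀, hμ₀, hμ₀_lt⟩ := exists_probOn_FFnu_lt_top hp0.le f hΩ hνP
  exact hlt.not_ge (ofReal_mul_le_of_isMinimizer hp0
    (hf_sconv.convexOn.monotoneOn_Ici_of_nonneg hf0 hf_nonneg) hΩm hK hKΩ hu_meas hu_nonneg
    hv_meas hKu (fun x hx => Ioc_subset_Icc_self (hKv x hx)) hμP hνP hνK hmin
    ((hmin μ₀ hμ₀).trans_lt hμ₀_lt).ne hr.le he)

/-- if `ν` has a.e. positive absolutely continuous part, the optimal
density `u` is a.e. positive in `Ω`. -/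
theorem statement_2 {n : ℕ} (Ω : Set (Rn n)) (hΩ : IsBoundedDomain Ω)
    (p : ℝ) (hp : 1 ≤ p) (f f' : ℝ → ℝ)
    (hf_nonneg : ∀ t : ℝ, 0 ≤ t → 0 ≤ f t) (hf0 : f 0 = 0)
    (hf_sconv : StrictConvexOn ℝ (Ici 0) f)
    (hf_deriv : ∀ t ∈ Ici (0:ℝ), HasDerivWithinAt f (f' t) (Ici 0) t)
    (hf'_cont : ContinuousOn f' (Ici 0)) (hf'0 : f' 0 = 0)
    (hf_super : Tendsto (fun t => f t / t) atTop atTop)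
    (νs : Measure (Rn n)) (hνs : νs ⟂ₘ (volume : Measure (Rn n)))
    (v : Rn n → ℝ) (hv_meas : Measurable v)
    (C : ℝ) (hv_bdd : ∀ᵐ x ∂(volume.restrict Ω), v x ≤ C)
    (hv_pos : ∀ᵐ x ∂(volume.restrict Ω), 0 < v x)
    (ν : Measure (Rn n)) (hν : ν = νs + densOn Ω v) (hνP : ProbOn Ω ν)
    (u : Rn n → ℝ) (hu_meas : Measurable u) (hu_nonneg : ∀ x, 0 ≤ u x)
    (μ : Measure (Rn n)) (hμ : μ = densOn Ω u) (hμP : ProbOn Ω μ)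
    (hmin : ∀ μ' : Measure (Rn n), ProbOn Ω μ' → FFnu p f Ω ν μ ≤ FFnu p f Ω ν μ') :
    ∀ᵐ x ∂(volume.restrict Ω), 0 < u x :=
  statement_2_general Ω hΩ p hp f f' hf_nonneg hf0 hf_sconv hf_deriv hf'0 νs hνs v hv_meas C hv_bdd
    hv_pos ν hν hνP u hu_meas hu_nonneg μ hμ hμP hmin
end

section
/- Let Ω ⊂ ℝ^n be a bounded domain with diameter D and p ≥ 1. Suppose (μ,ν) is an optimal pair for the minimization of 𝔉^p over pairs of probability measures on Ω, with 𝔉^p(μ,ν) < +∞, and suppose the function g is locally Lipschitz on (0,1]. Then ν has finitely many atoms, i.e. ν = ∑_{i=1}^m a_i δ_{x_i} for some finite m, positive masses a_i, and points x_i ∈ Ω. -/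
open MeasureTheory Set Filter Topology Metric
open scoped ENNReal NNReal

/-!
Since `G(ν) < ∞`, `ν = ∑ aᵢ δ_{xᵢ}` is purely atomic. If it had infinitely many atoms, fix one,
of mass `b` at `yb`, and merge into it an atom of small mass `m` at `ys`, i.e. replace `ν` by its
image under the map sending `ys` to `yb`. Rerouting the mass `m` raises the transport cost by at
most `D^p m`, and `G` changes by `g(b + m) - g(b) - g(m) ≤ L m - g(m)` with `L` a local Lipschitz
constant of `g` at `b`. As `g(m)/m → ∞` and there are atoms of arbitrarily small mass, this
contradicts optimality for `m` small enough.
-/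

section AtomicMeasure

open scoped Classical

variable {α : Type*} [MeasurableSpace α]

noncomputable def atomicSum (a : ℕ → ℝ) (x : ℕ → α) : Measure α :=
  Measure.sum fun i => ENNReal.ofReal (a i) • Measure.dirac (x i)

/-- The representations of `ν` over which `Gfun` takes its infimum. -/
structure IsAtomicRep (ν : Measure α) (a : ℕ → ℝ) (x : ℕ → α) : Prop where
  nonneg : ∀ i, 0 ≤ a i
  injOn : InjOn x {i | a i ≠ 0}
  eq : ν = atomicSum a x

theorem atomicSum_apply (a : ℕ → ℝ) (x : ℕ → α) {s : Set α} (hs : MeasurableSet s) :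
    atomicSum a x s = ∑' i, if x i ∈ s then ENNReal.ofReal (a i) else 0 := by
  rw [atomicSum, Measure.sum_apply _ hs]
  refine tsum_congr fun i => ?_
  by_cases h : x i ∈ s <;> simp [Measure.dirac_apply' _ hs, h]

theorem atomicSum_eq_finsetSum {a : ℕ → ℝ} (x : ℕ → α) {s : Finset ℕ} (h : ∀ i ∉ s, a i = 0) :
    atomicSum a x = ∑ i ∈ s, ENNReal.ofReal (a i) • Measure.dirac (x i) := by
  ext t ht
  rw [atomicSum, Measure.sum_apply _ ht, Measure.finsetSum_apply]
  exact tsum_eq_sum fun i hi => by simp [h i hi]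

theorem ENNReal.tsum_add_eq_tsum_add_of_eq_off_pair {β : Type*} [DecidableEq β] {F G : β → ℝ≥0∞}
    {j k : β} (hjk : j ≠ k) (h : ∀ i, i ≠ j → i ≠ k → F i = G i) :
    ∑' i, F i + (G j + G k) = ∑' i, G i + (F j + F k) := by
  have split : ∀ H : β → ℝ≥0∞,
      ∑' i, H i = H j + H k + ∑' i, if i = j ∨ i = k then 0 else H i := fun H => by
    rw [ENNReal.tsum_eq_add_tsum_ite j, ENNReal.tsum_eq_add_tsum_ite k, if_neg hjk.symm, add_assoc]
    congr 2
    exact tsum_congr fun i => by by_cases i = j <;> by_cases i = k <;> simp [*]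
  have rest : (∑' i, if i = j ∨ i = k then 0 else F i) = ∑' i, if i = j ∨ i = k then 0 else G i :=
    tsum_congr fun i => by
      split_ifs with hi
      · rfl
      · push Not at hi
        exact h i hi.1 hi.2
  rw [split F, split G, rest]
  ring

noncomputable def moveAtom (ys yb : α) (y : α) : α := if y = ys then yb else y

namespace IsAtomicRep

variable {ν : Measure α} {a : ℕ → ℝ} {x : ℕ → α}

theorem summable (hr : IsAtomicRep ν a x) [IsFiniteMeasure ν] : Summable a := by
  have htot : ∑' i, ENNReal.ofReal (a i) = ν univ := by
    simp [hr.eq, atomicSum_apply _ _ MeasurableSet.univ]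
  exact (ENNReal.summable_toReal (htot ▸ measure_ne_top ν univ)).congr fun i =>
    ENNReal.toReal_ofReal (hr.nonneg i)

theorem exists_small_atom (hr : IsAtomicRep ν a x) [IsFiniteMeasure ν]
    (hinf : {i | a i ≠ 0}.Infinite) (k : ℕ) {δ : ℝ} (hδ : 0 < δ) :
    ∃ i ≠ k, 0 < a i ∧ a i < δ := by
  have hlarge : {i | δ ≤ a i}.Finite := by
    simpa [not_lt] using hr.summable.tendsto_cofinite_zero.eventually (gt_mem_nhds hδ)
  obtain ⟨i, hi, hi'⟩ := (hinf.sdiff (hlarge.insert k)).nonempty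
  simp only [mem_insert_iff, mem_ofPred_eq, not_or, not_le] at hi'
  exact ⟨i, hi'.1, (hr.nonneg i).lt_of_ne' hi, hi'.2⟩

end IsAtomicRep

variable [MeasurableSingletonClass α]

theorem measurable_moveAtom (ys yb : α) : Measurable (moveAtom ys yb) :=
  Measurable.ite (p := (· = ys)) (measurableSet_singleton ys) measurable_const measurable_id

theorem atomicSum_singleton {a : ℕ → ℝ} {x : ℕ → α} (hx : InjOn x {i | a i ≠ 0}) {k : ℕ}
    (hk : a k ≠ 0) : atomicSum a x {x k} = ENNReal.ofReal (a k) := by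
  rw [atomicSum_apply a x (measurableSet_singleton _), tsum_eq_single k]
  · simp
  · intro j hj
    by_cases haj : a j = 0
    · simp [haj]
    · have hxj : x j ≠ x k := fun h => hj (hx haj hk h)
      simp [hxj]

theorem exists_ne_zero_of_atomicSum_singleton_ne_zero {a : ℕ → ℝ} {x : ℕ → α} {y : α}
    (hy : atomicSum a x {y} ≠ 0) : ∃ k, a k ≠ 0 ∧ x k = y := by
  rw [atomicSum_apply a x (measurableSet_singleton y), Ne, ENNReal.tsum_eq_zero] at hy
  push Not at hy
  obtain ⟨k, hk⟩ := hy
  by_cases hxk : x k = y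
  · exact ⟨k, fun h => hk (by simp [h]), hxk⟩
  · exact absurd (by simp [hxk]) hk

theorem map_atomicSum_moveAtom {a : ℕ → ℝ} {x : ℕ → α} (hnn : ∀ i, 0 ≤ a i)
    (hinj : InjOn x {i | a i ≠ 0}) {ks kb : ℕ} (hks : a ks ≠ 0) (hkb : a kb ≠ 0)
    (hne : ks ≠ kb) :
    (atomicSum a x).map (moveAtom (x ks) (x kb))
      = atomicSum (Function.update (Function.update a kb (a kb + a ks)) ks 0) x := by
  set a' := Function.update (Function.update a kb (a kb + a ks)) ks 0 with ha'
  have ha'_off : ∀ i, i ≠ ks → i ≠ kb → a' i = a i := fun i h1 h2 => by simp [ha', h1, h2]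
  have ha'_ks : a' ks = 0 := by simp [ha']
  have ha'_kb : a' kb = a kb + a ks := by simp [ha', hne.symm]
  ext s hs
  have hT := measurable_moveAtom (x ks) (x kb)
  rw [Measure.map_apply hT hs, atomicSum_apply _ _ (hT hs), atomicSum_apply _ _ hs]
  set F := fun i => if x i ∈ moveAtom (x ks) (x kb) ⁻¹' s then ENNReal.ofReal (a i) else 0
  set G := fun i => if x i ∈ s then ENNReal.ofReal (a' i) else 0
  have hoff : ∀ i, i ≠ ks → i ≠ kb → F i = G i := fun i h1 h2 => by
    by_cases hai : a i = 0
    · simp [F, G, hai, ha'_off i h1 h2]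
    · have hxi : x i ≠ x ks := fun h => h1 (hinj hai hks h)
      simp [F, G, moveAtom, hxi, ha'_off i h1 h2]
  have hpair : F ks + F kb = G ks + G kb := by
    have hxkb : x kb ≠ x ks := fun h => hne (hinj hkb hks h).symm
    by_cases hs_kb : x kb ∈ s <;>
      simp [F, G, moveAtom, hxkb, hs_kb, ha'_ks, ha'_kb,
        ENNReal.ofReal_add (hnn kb) (hnn ks), add_comm (ENNReal.ofReal (a ks))]
  have hfin : G ks + G kb ≠ ⊤ := by
    simp only [G, ha'_ks, ENNReal.ofReal_zero, ite_self, zero_add]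
    split_ifs <;> simp
  have key := ENNReal.tsum_add_eq_tsum_add_of_eq_off_pair hne hoff
  rw [← hpair] at key
  exact (ENNReal.add_left_inj (hpair ▸ hfin)).1 key

namespace IsAtomicRep

variable {ν : Measure α} {a : ℕ → ℝ} {x : ℕ → α}

theorem apply_singleton (hr : IsAtomicRep ν a x) {k : ℕ} (hk : a k ≠ 0) :
    ν {x k} = ENNReal.ofReal (a k) :=
  hr.eq ▸ atomicSum_singleton hr.injOn hk

theorem exists_index_of_apply_singleton (hr : IsAtomicRep ν a x) {y : α} {c : ℝ} (hc : 0 < c)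
    (hy : ν {y} = ENNReal.ofReal c) : ∃ k, x k = y ∧ a k = c := by
  obtain ⟨k, hk, rfl⟩ := exists_ne_zero_of_atomicSum_singleton_ne_zero
    (hr.eq ▸ hy ▸ (ENNReal.ofReal_pos.2 hc).ne')
  rw [hr.apply_singleton hk] at hy
  exact ⟨k, rfl, (ENNReal.ofReal_eq_ofReal_iff (hr.nonneg k) hc.le).1 hy⟩

theorem mem_of_ne_zero (hr : IsAtomicRep ν a x) {Ω : Set α} (hΩ : ν Ωᶜ = 0) {k : ℕ}
    (hk : a k ≠ 0) : x k ∈ Ω := by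
  by_contra hx
  have hnull : ν {x k} = 0 := measure_mono_null (singleton_subset_iff.2 hx) hΩ
  rw [hr.apply_singleton hk, ENNReal.ofReal_eq_zero] at hnull
  exact hk (le_antisymm hnull (hr.nonneg k))

theorem add_le_one (hr : IsAtomicRep ν a x) [IsProbabilityMeasure ν] {k l : ℕ} (hkl : k ≠ l)
    (hk : a k ≠ 0) (hl : a l ≠ 0) : a k + a l ≤ 1 := by
  have hdisj : Disjoint ({x k} : Set α) {x l} :=
    disjoint_singleton.2 (hr.injOn.ne hk hl hkl)
  have h := prob_le_one (μ := ν) (s := {x k} ∪ {x l})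
  rwa [measure_union hdisj (measurableSet_singleton _), hr.apply_singleton hk,
    hr.apply_singleton hl, ← ENNReal.ofReal_add (hr.nonneg k) (hr.nonneg l),
    ENNReal.ofReal_le_one] at h

theorem exists_fin_sum (hr : IsAtomicRep ν a x) (hfin : {i | a i ≠ 0}.Finite) {Ω : Set α}
    (hΩ : ν Ωᶜ = 0) :
    ∃ (m : ℕ) (b : Fin m → ℝ) (y : Fin m → α), (∀ i, 0 < b i) ∧ (∀ i, y i ∈ Ω) ∧
      ν = ∑ i : Fin m, ENNReal.ofReal (b i) • Measure.dirac (y i) := by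
  set s := hfin.toFinset
  set e := s.equivFin.symm
  have hs : ∀ i, a (e i) ≠ 0 := fun i => hfin.mem_toFinset.1 (e i).2
  refine ⟨s.card, fun i => a (e i), fun i => x (e i), fun i => (hr.nonneg _).lt_of_ne' (hs i),
    fun i => hr.mem_of_ne_zero hΩ (hs i), ?_⟩
  rw [hr.eq, atomicSum_eq_finsetSum x (s := s) fun i hi => not_not.1 (hfin.mem_toFinset.not.1 hi),
    ← Finset.sum_coe_sort s]
  exact (e.sum_comp fun j : s => ENNReal.ofReal (a j) • Measure.dirac (x j)).symm

theorem map_moveAtom (hr : IsAtomicRep ν a x) {ks kb : ℕ} (hks : a ks ≠ 0) (hkb : a kb ≠ 0)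
    (hne : ks ≠ kb) :
    IsAtomicRep (ν.map (moveAtom (x ks) (x kb)))
      (Function.update (Function.update a kb (a kb + a ks)) ks 0) x := by
  obtain ⟨hnn, hinj, rfl⟩ := hr
  have ha'_ne : ∀ i, Function.update (Function.update a kb (a kb + a ks)) ks 0 i ≠ 0 →
      a i ≠ 0 := fun i hi => by
    simp only [Function.update_apply] at hi
    split_ifs at hi with h1 h2
    exacts [absurd rfl hi, h2 ▸ hkb, hi]
  refine ⟨fun i => ?_, fun i hi j hj => hinj (ha'_ne i hi) (ha'_ne j hj),
    map_atomicSum_moveAtom hnn hinj hks hkb hne⟩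
  simp only [Function.update_apply]
  split_ifs
  exacts [le_rfl, add_nonneg (hnn kb) (hnn ks), hnn i]

end IsAtomicRep

end AtomicMeasure

section Transport

variable {n : ℕ}

theorem map_prodMap_mem_couplings {μ ν : Measure (Rn n)} {γ : Measure (Rn n × Rn n)}
    (hγ : γ ∈ Couplings μ ν) {T : Rn n → Rn n} (hT : Measurable T) :
    γ.map (Prod.map id T) ∈ Couplings μ (ν.map T) := by
  obtain ⟨hγP, hγ1, hγ2⟩ := hγ
  have hmap : Measurable (Prod.map (id : Rn n → Rn n) T) := measurable_id.prodMap hT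
  refine ⟨Measure.isProbabilityMeasure_map hmap.aemeasurable, ?_, ?_⟩
  · rw [Measure.map_map measurable_fst hmap]
    exact hγ1
  · rw [Measure.map_map measurable_snd hmap, show Prod.snd ∘ Prod.map id T = T ∘ Prod.snd from rfl,
      ← Measure.map_map hT measurable_snd, hγ2]

theorem lintegral_cost_map_moveAtom_le {p : ℝ} {Ω : Set (Rn n)} {γ : Measure (Rn n × Rn n)}
    (hγ : ∀ᵐ z ∂γ, z.1 ∈ Ω) {ys yb : Rn n} {C : ℝ} (hC : ∀ x ∈ Ω, ‖x - yb‖ ^ p ≤ C) :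
    ∫⁻ z, ENNReal.ofReal (‖z.1 - z.2‖ ^ p) ∂(γ.map (Prod.map id (moveAtom ys yb)))
      ≤ ∫⁻ z, ENNReal.ofReal (‖z.1 - z.2‖ ^ p) ∂γ
        + ENNReal.ofReal C * γ (Prod.snd ⁻¹' {ys}) := by
  have hcost : Measurable fun z : Rn n × Rn n => ENNReal.ofReal (‖z.1 - z.2‖ ^ p) := by
    fun_prop
  have hys : MeasurableSet ((Prod.snd : Rn n × Rn n → Rn n) ⁻¹' {ys}) :=
    measurable_snd (measurableSet_singleton ys)
  rw [lintegral_map hcost (measurable_id.prodMap (measurable_moveAtom ys yb)),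
    ← lintegral_indicator_const hys, ← lintegral_add_right _ (measurable_const.indicator hys)]
  refine lintegral_mono_ae (hγ.mono fun z hz => ?_)
  by_cases h : z.2 = ys
  · simp only [Prod.map_fst, id_eq, Prod.map_snd, moveAtom, if_pos h,
      indicator_of_mem (show z ∈ Prod.snd ⁻¹' {ys} from h)]
    exact le_add_left (ENNReal.ofReal_le_ofReal (hC z.1 hz))
  · simp only [Prod.map_fst, id_eq, Prod.map_snd, moveAtom, if_neg h]
    exact le_self_add

theorem Tcost_map_moveAtom_le {p : ℝ} {Ω : Set (Rn n)} {μ ν : Measure (Rn n)} (hμ : μ Ωᶜ = 0)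
    {ys yb : Rn n} {C : ℝ} (hC : ∀ x ∈ Ω, ‖x - yb‖ ^ p ≤ C) :
    Tcost p μ (ν.map (moveAtom ys yb)) ≤ Tcost p μ ν + ENNReal.ofReal C * ν {ys} := by
  unfold Tcost
  simp only [ENNReal.iInf_add]
  refine le_iInf₂ fun γ hγ => (iInf₂_le _ (map_prodMap_mem_couplings hγ
    (measurable_moveAtom ys yb))).trans ?_
  have hfst : ∀ᵐ z ∂γ, z.1 ∈ Ω := ae_iff.2 <| nonpos_iff_eq_zero.1 <|
    (Measure.le_map_apply measurable_fst.aemeasurable Ωᶜ).trans_eq (hγ.2.1.symm ▸ hμ)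
  rw [← hγ.2.2, Measure.map_apply measurable_snd (measurableSet_singleton ys)]
  exact lintegral_cost_map_moveAtom_le hfst hC

theorem ProbOn.map_moveAtom {Ω : Set (Rn n)} (hΩ : MeasurableSet Ω) {ν : Measure (Rn n)}
    (hν : ProbOn Ω ν) {ys yb : Rn n} (hyb : yb ∈ Ω) : ProbOn Ω (ν.map (moveAtom ys yb)) := by
  have := hν.1
  refine ⟨Measure.isProbabilityMeasure_map (measurable_moveAtom ys yb).aemeasurable, ?_⟩
  rw [Measure.map_apply (measurable_moveAtom ys yb) hΩ.compl]
  refine measure_mono_null (fun y hy => ?_) hν.2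
  by_cases h : y = ys
  · exact absurd (by simpa [moveAtom, h] using hy) (not_not.2 hyb)
  · simpa [moveAtom, h] using hy

end Transport

section AtomCost

variable {n : ℕ} {g : ℝ → ℝ} {ν : Measure (Rn n)}

theorem IsAtomicRep.Gfun_le {a : ℕ → ℝ} {x : ℕ → Rn n} (hr : IsAtomicRep ν a x) :
    Gfun g ν ≤ ∑' i, ENNReal.ofReal (g (a i)) :=
  iInf_le_of_le ⟨(a, x), hr.nonneg, fun _ _ hi hj h => hr.injOn hi hj h, hr.eq⟩ le_rfl

theorem le_Gfun_add {c d : ℝ≥0∞}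
    (h : ∀ a x, IsAtomicRep ν a x → c ≤ ∑' i, ENNReal.ofReal (g (a i)) + d) :
    c ≤ Gfun g ν + d := by
  rw [Gfun, ENNReal.iInf_add]
  exact le_iInf fun r => h _ _ ⟨r.2.1, fun i hi j hj => r.2.2.1 i j hi hj, r.2.2.2⟩

theorem exists_isAtomicRep_of_Gfun_ne_top (hG : Gfun g ν ≠ ⊤) :
    ∃ a x, IsAtomicRep ν a x := by
  by_contra h
  push Not at h
  have htop : ⊤ ≤ Gfun g ν + 0 := le_Gfun_add fun a x hr => absurd hr (h a x)
  exact hG (top_le_iff.1 (by simpa using htop))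

theorem Gfun_map_moveAtom_add_le (hg0 : g 0 = 0) {ys yb : Rn n} (hne : ys ≠ yb) {m b : ℝ}
    (hm : 0 < m) (hb : 0 < b) (hys : ν {ys} = ENNReal.ofReal m)
    (hyb : ν {yb} = ENNReal.ofReal b) :
    Gfun g (ν.map (moveAtom ys yb)) + (ENNReal.ofReal (g b) + ENNReal.ofReal (g m))
      ≤ Gfun g ν + ENNReal.ofReal (g (b + m)) := by
  refine le_Gfun_add fun a x hr => ?_
  obtain ⟨ks, rfl, haks⟩ := hr.exists_index_of_apply_singleton hm hys
  obtain ⟨kb, rfl, hakb⟩ := hr.exists_index_of_apply_singleton hb hyb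
  have hne' : kb ≠ ks := fun h => hne (h ▸ rfl)
  have hr' := hr.map_moveAtom (haks ▸ hm.ne') (hakb ▸ hb.ne') hne'.symm
  set a' := Function.update (Function.update a kb (a kb + a ks)) ks 0
  calc Gfun g (ν.map (moveAtom (x ks) (x kb))) + (ENNReal.ofReal (g b) + ENNReal.ofReal (g m))
      ≤ ∑' i, ENNReal.ofReal (g (a' i))
          + (ENNReal.ofReal (g (a kb)) + ENNReal.ofReal (g (a ks))) := by
        rw [← haks, ← hakb]
        gcongr
        exact hr'.Gfun_le
    _ = ∑' i, ENNReal.ofReal (g (a i))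
          + (ENNReal.ofReal (g (a' kb)) + ENNReal.ofReal (g (a' ks))) :=
        ENNReal.tsum_add_eq_tsum_add_of_eq_off_pair (F := fun i => ENNReal.ofReal (g (a' i)))
          (G := fun i => ENNReal.ofReal (g (a i))) hne' fun i h1 h2 => by simp [a', h1, h2]
    _ = ∑' i, ENNReal.ofReal (g (a i)) + ENNReal.ofReal (g (b + m)) := by
        simp [a', hne', hg0, haks, hakb]

/-- Optimality tested against the competitor `(μ, ν.map (moveAtom ys yb))`. -/
theorem atom_merge_le_of_forall_FFp_le {Ω : Set (Rn n)} (hΩ : MeasurableSet Ω) {p : ℝ}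
    {f : ℝ → ℝ} (hg0 : g 0 = 0) (hg_nonneg : ∀ t ∈ Icc (0:ℝ) 1, 0 ≤ g t) {μ : Measure (Rn n)}
    (hμ : μ Ωᶜ = 0) (hν : ProbOn Ω ν)
    (hopt : ∀ ν', ProbOn Ω ν' → FFp p f g Ω μ ν ≤ FFp p f g Ω μ ν')
    (hfin : FFp p f g Ω μ ν ≠ ⊤) {ys yb : Rn n} (hne : ys ≠ yb) (hyb : yb ∈ Ω) {m b C : ℝ}
    (hm : 0 < m) (hb : 0 < b) (hbm : b + m ≤ 1) (hνys : ν {ys} = ENNReal.ofReal m)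
    (hνyb : ν {yb} = ENNReal.ofReal b) (hC : ∀ x ∈ Ω, ‖x - yb‖ ^ p ≤ C) :
    g b + g m ≤ C * m + g (b + m) := by
  have hC0 : 0 ≤ C := (Real.rpow_nonneg (norm_nonneg _) p).trans (hC yb hyb)
  have hgb := hg_nonneg b ⟨hb.le, by linarith⟩
  have hgm := hg_nonneg m ⟨hm.le, by linarith⟩
  have hgbm := hg_nonneg (b + m) ⟨by positivity, hbm⟩
  set ν' := ν.map (moveAtom ys yb)
  have key : FFp p f g Ω μ ν + ENNReal.ofReal (g b + g m)
      ≤ FFp p f g Ω μ ν + ENNReal.ofReal (C * m + g (b + m)) :=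
    calc FFp p f g Ω μ ν + ENNReal.ofReal (g b + g m)
        ≤ FFp p f g Ω μ ν' + (ENNReal.ofReal (g b) + ENNReal.ofReal (g m)) := by
          rw [ENNReal.ofReal_add hgb hgm]
          gcongr
          exact hopt _ (hν.map_moveAtom hΩ hyb)
      _ = Tcost p μ ν' + Ffun f Ω μ
            + (Gfun g ν' + (ENNReal.ofReal (g b) + ENNReal.ofReal (g m))) := by
          rw [FFp]
          ring
      _ ≤ (Tcost p μ ν + ENNReal.ofReal C * ν {ys}) + Ffun f Ω μ
            + (Gfun g ν + ENNReal.ofReal (g (b + m))) :=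
          add_le_add (add_le_add (Tcost_map_moveAtom_le hμ hC) le_rfl)
            (Gfun_map_moveAtom_add_le hg0 hne hm hb hνys hνyb)
      _ = FFp p f g Ω μ ν + ENNReal.ofReal (C * m + g (b + m)) := by
          rw [FFp, hνys, ENNReal.ofReal_add (by positivity) hgbm, ENNReal.ofReal_mul hC0]
          ring
  exact (ENNReal.ofReal_le_ofReal_iff (by positivity)).1 ((ENNReal.add_le_add_iff_left hfin).1 key)

end AtomCost

theorem exists_forall_mul_le_of_tendsto_div {g : ℝ → ℝ}
    (hg : Tendsto (fun t => g t / t) (𝓝[>] 0) atTop) (K : ℝ) :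
    ∃ δ > 0, ∀ t, 0 < t → t < δ → K * t ≤ g t := by
  obtain ⟨δ, hδ, h⟩ := mem_nhdsGT_iff_exists_Ioo_subset.1 (hg.eventually (eventually_ge_atTop K))
  exact ⟨δ, hδ, fun t ht htδ => (le_div_iff₀ ht).1 (h ⟨ht, htδ⟩)⟩

theorem LipschitzOnWith.apply_le_apply_add_mul {g : ℝ → ℝ} {L : ℝ≥0} {s : Set ℝ}
    (hL : LipschitzOnWith L g s) {x y : ℝ} (hx : x ∈ s) (hy : y ∈ s) :
    g y ≤ g x + L * |y - x| := by
  have h := hL.dist_le_mul y hy x hx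
  rw [Real.dist_eq, Real.dist_eq] at h
  linarith [le_abs_self (g y - g x)]

theorem statement_11_general {n : ℕ} (Ω : Set (Rn n)) (hΩ : IsBoundedDomain Ω)
    (p : ℝ) (hp : 1 ≤ p) (f g : ℝ → ℝ)
    (hg0 : g 0 = 0) (hg_nonneg : ∀ t ∈ Icc (0:ℝ) 1, 0 ≤ g t)
    (hg_inf : Tendsto (fun t => g t / t) (𝓝[>] (0:ℝ)) atTop)
    (hg_lip : ∀ t ∈ Ioc (0:ℝ) 1, ∃ ε > (0:ℝ), ∃ L : ℝ≥0,
      LipschitzOnWith L g (Ioc (0:ℝ) 1 ∩ Metric.ball t ε))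
    (μ ν : Measure (Rn n)) (hμP : ProbOn Ω μ) (hνP : ProbOn Ω ν)
    (hopt : ∀ μ' ν' : Measure (Rn n), ProbOn Ω μ' → ProbOn Ω ν' →
      FFp p f g Ω μ ν ≤ FFp p f g Ω μ' ν')
    (hfin : FFp p f g Ω μ ν < ⊤) :
    ∃ (m : ℕ) (a : Fin m → ℝ) (x : Fin m → Rn n),
      (∀ i, 0 < a i) ∧ (∀ i, x i ∈ Ω) ∧
      ν = ∑ i : Fin m, ENNReal.ofReal (a i) • Measure.dirac (x i) := by
  obtain ⟨U, -, -, -, hU, rfl, -⟩ := hΩ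
  have := hνP.1
  obtain ⟨a, x, hr⟩ := exists_isAtomicRep_of_Gfun_ne_top (ENNReal.add_ne_top.1 hfin.ne).2
  by_cases hsupp : {i | a i ≠ 0}.Finite
  · exact hr.exists_fin_sum hsupp hνP.2
  have hinf : {i | a i ≠ 0}.Infinite := hsupp
  obtain ⟨kb, hkb⟩ := hinf.nonempty
  have hb : 0 < a kb := (hr.nonneg kb).lt_of_ne' hkb
  have hb1 : a kb ≤ 1 := ENNReal.ofReal_le_one.1 (hr.apply_singleton hkb ▸ prob_le_one)
  have hyb := hr.mem_of_ne_zero hνP.2 hkb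
  obtain ⟨ε, hε, L, hL⟩ := hg_lip (a kb) ⟨hb, hb1⟩
  set C := diam (closure U) ^ p
  have hC : ∀ y ∈ closure U, ‖y - x kb‖ ^ p ≤ C := fun y hy =>
    Real.rpow_le_rpow (norm_nonneg _)
      (dist_eq_norm y (x kb) ▸ dist_le_diam_of_mem hU.closure hy hyb) (by linarith)
  obtain ⟨δ, hδ, hgδ⟩ := exists_forall_mul_le_of_tendsto_div hg_inf (C + L + 1)
  obtain ⟨ks, hne, hm, hmδ⟩ := hr.exists_small_atom hinf kb (lt_min hδ hε)
  have hbm := hr.add_le_one hne.symm hkb hm.ne'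
  have hLip := hL.apply_le_apply_add_mul ⟨⟨hb, hb1⟩, mem_ball_self hε⟩
    ⟨⟨by positivity, hbm⟩, by simpa [abs_of_pos hm] using hmδ.trans_le (min_le_right _ _)⟩
  rw [add_sub_cancel_left, abs_of_pos hm] at hLip
  have hmerge := atom_merge_le_of_forall_FFp_le isClosed_closure.measurableSet hg0 hg_nonneg
    hμP.2 hνP (hopt μ · hμP) hfin.ne (hr.injOn.ne hm.ne' hkb hne) hyb hm hb hbm
    (hr.apply_singleton hm.ne') (hr.apply_singleton hkb) hC
  nlinarith [hgδ (a ks) hm (hmδ.trans_le (min_le_left _ _))]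

/-- if `g` is locally Lipschitz on `(0,1]`, an optimal `ν` has
finitely many atoms. -/
theorem statement_11 {n : ℕ} (Ω : Set (Rn n)) (hΩ : IsBoundedDomain Ω)
    (p : ℝ) (hp : 1 ≤ p) (f f' g : ℝ → ℝ)
    (hf_nonneg : ∀ t : ℝ, 0 ≤ t → 0 ≤ f t) (hf0 : f 0 = 0)
    (hf_sconv : StrictConvexOn ℝ (Ici 0) f)
    (hf_deriv : ∀ t ∈ Ici (0:ℝ), HasDerivWithinAt f (f' t) (Ici 0) t)
    (hf'_cont : ContinuousOn f' (Ici 0)) (hf'0 : f' 0 = 0)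
    (hf_super : Tendsto (fun t => f t / t) atTop atTop)
    (hg0 : g 0 = 0) (hg_nonneg : ∀ t ∈ Icc (0:ℝ) 1, 0 ≤ g t)
    (hg_lsc : LowerSemicontinuousOn g (Icc 0 1))
    (hg_sub : ∀ s t : ℝ, 0 ≤ s → 0 ≤ t → s + t ≤ 1 → g (s + t) ≤ g s + g t)
    (hg_inf : Tendsto (fun t => g t / t) (𝓝[>] (0:ℝ)) atTop)
    (hg_lip : ∀ t ∈ Ioc (0:ℝ) 1, ∃ ε > (0:ℝ), ∃ L : ℝ≥0,
      LipschitzOnWith L g (Ioc (0:ℝ) 1 ∩ Metric.ball t ε))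
    (μ ν : Measure (Rn n)) (hμP : ProbOn Ω μ) (hνP : ProbOn Ω ν)
    (hopt : ∀ μ' ν' : Measure (Rn n), ProbOn Ω μ' → ProbOn Ω ν' →
      FFp p f g Ω μ ν ≤ FFp p f g Ω μ' ν')
    (hfin : FFp p f g Ω μ ν < ⊤) :
    ∃ (m : ℕ) (a : Fin m → ℝ) (x : Fin m → Rn n),
      (∀ i, 0 < a i) ∧ (∀ i, x i ∈ Ω) ∧
      ν = ∑ i : Fin m, ENNReal.ofReal (a i) • Measure.dirac (x i) :=
  statement_11_general Ω hΩ p hp f g hg0 hg_nonneg hg_inf hg_lip μ ν hμP hνP hopt hfin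
end

section
/- Let p ≥ 1, and let f(t) = a t^q with a > 0, q > 1, and g(t) = b t^r with b > 0, 0 < r < 1 (so k(t) = (f')^{-1}(t) = (t/(aq))^{1/(q−1)}). Then lim_{R→0+} g''( ∫_0^R k(R^p − r^p) n ω_n r^{n−1} dr ) · ∫_0^R k'(R^p − r^p) n ω_n r^{n−1} dr = −∞, where ω_n is the volume of the unit ball in ℝ^n; in particular the limsup as R → 0+ of this quantity is < −1. -/
open MeasureTheory Set Filter Topology Metric
open scoped ENNReal NNReal

/-!
For `R > 0` the substitution `s = Rσ` turns both integrals into pure powers of `R`: with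
`α = 1/(q-1)` and `e = n + pα`, the `k`-integral is `K R^e` and the `k'`-integral is `L R^(e-p)`,
where `K, L > 0` are Beta-type constants (finite because `α - 1 > -1`). The quantity is then
`b r (r-1) K^(r-2) L · R^(e(r-1) - p)`, a negative multiple of a negative power of `R`.
-/

open Real

/-- Equals `B((m+1)/p, α+1) / p`. -/
noncomputable def profileIntegral (p α m : ℝ) : ℝ :=
  ∫ σ in (0:ℝ)..1, (1 - σ ^ p) ^ α * σ ^ m

lemma one_sub_rpow_rpow_mul_rpow_le {p α m σ : ℝ} (hp : 1 ≤ p) (hm : 0 ≤ m)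
    (hσ₀ : 0 < σ) (hσ₁ : σ ≤ 1) :
    (1 - σ ^ p) ^ α * σ ^ m ≤ (1 - σ) ^ min α 0 := by
  have hσp : σ ^ p ≤ σ := by simpa using rpow_le_rpow_of_exponent_ge hσ₀ hσ₁ hp
  calc (1 - σ ^ p) ^ α * σ ^ m ≤ (1 - σ ^ p) ^ α :=
        mul_le_of_le_one_right (rpow_nonneg (by linarith) α) (rpow_le_one hσ₀.le hσ₁ hm)
    _ ≤ (1 - σ) ^ min α 0 := by
      rcases le_total 0 α with hα | hα
      · rw [min_eq_right hα, rpow_zero]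
        exact rpow_le_one (by linarith) (by linarith [rpow_nonneg hσ₀.le p]) hα
      · rw [min_eq_left hα]
        rcases hσ₁.eq_or_lt with rfl | hlt
        · simp
        · exact rpow_le_rpow_of_nonpos (by linarith) (by linarith) hα

lemma intervalIntegrable_one_sub_rpow_rpow_mul_rpow {p α m : ℝ} (hp : 1 ≤ p) (hα : -1 < α)
    (hm : 0 ≤ m) :
    IntervalIntegrable (fun σ : ℝ => (1 - σ ^ p) ^ α * σ ^ m) volume 0 1 := by
  have hdom : IntervalIntegrable (fun σ : ℝ => (1 - σ) ^ min α 0) volume 0 1 := by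
    simpa using ((intervalIntegral.intervalIntegrable_rpow' (a := 0) (b := 1)
      (lt_min hα neg_one_lt_zero)).comp_sub_left 1).symm
  refine hdom.mono_fun (Measurable.aestronglyMeasurable (by fun_prop)) ?_
  filter_upwards [ae_restrict_mem measurableSet_uIoc] with σ hσ
  rw [uIoc_of_le zero_le_one] at hσ
  have hσp : σ ^ p ≤ 1 := rpow_le_one hσ.1.le hσ.2 (by linarith)
  rw [norm_of_nonneg (mul_nonneg (rpow_nonneg (by linarith) α) (rpow_nonneg hσ.1.le m)),
    norm_of_nonneg (rpow_nonneg (by linarith [hσ.2]) _)]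
  exact one_sub_rpow_rpow_mul_rpow_le hp hm hσ.1 hσ.2

lemma profileIntegral_pos {p α m : ℝ} (hp : 1 ≤ p) (hα : -1 < α) (hm : 0 ≤ m) :
    0 < profileIntegral p α m := by
  refine intervalIntegral.intervalIntegral_pos_of_pos_on
    (intervalIntegrable_one_sub_rpow_rpow_mul_rpow hp hα hm) (fun σ hσ => ?_) one_pos
  have hσp : σ ^ p < 1 := rpow_lt_one hσ.1.le hσ.2 (by linarith)
  exact mul_pos (rpow_pos_of_pos (by linarith) α) (rpow_pos_of_pos hσ.1 m)

lemma integral_rpow_sub_rpow_rpow_mul_rpow {p R : ℝ} (α m : ℝ) (hp : 0 ≤ p) (hR : 0 < R) :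
    ∫ s in (0:ℝ)..R, (R ^ p - s ^ p) ^ α * s ^ m
      = profileIntegral p α m * R ^ (m + 1 + p * α) := by
  have hscale : ∫ s in (0:ℝ)..R, (R ^ p - s ^ p) ^ α * s ^ m
      = R * ∫ σ in (0:ℝ)..1, (R ^ p - (R * σ) ^ p) ^ α * (R * σ) ^ m := by
    rw [intervalIntegral.integral_comp_mul_left (fun s => (R ^ p - s ^ p) ^ α * s ^ m) hR.ne',
      mul_zero, mul_one, smul_eq_mul, mul_inv_cancel_left₀ hR.ne']
  have hintegrand : ∀ σ ∈ uIcc (0:ℝ) 1, (R ^ p - (R * σ) ^ p) ^ α * (R * σ) ^ m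
      = R ^ (p * α) * R ^ m * ((1 - σ ^ p) ^ α * σ ^ m) := by
    intro σ hσ
    rw [uIcc_of_le zero_le_one] at hσ
    have hσp : σ ^ p ≤ 1 := rpow_le_one hσ.1 hσ.2 hp
    rw [mul_rpow hR.le hσ.1, mul_rpow hR.le hσ.1, ← mul_one_sub,
      mul_rpow (rpow_nonneg hR.le p) (by linarith), ← rpow_mul hR.le]
    ring
  rw [hscale, intervalIntegral.integral_congr hintegrand, intervalIntegral.integral_const_mul,
    rpow_add hR, rpow_add hR, rpow_one, profileIntegral]
  ring

lemma integral_div_rpow_mul_const_mul_rpow {p A R : ℝ} (α c m : ℝ) (hp : 0 ≤ p)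
    (hA : 0 ≤ A) (hR : 0 < R) :
    ∫ s in (0:ℝ)..R, ((R ^ p - s ^ p) / A) ^ α * (c * s ^ m)
      = c / A ^ α * profileIntegral p α m * R ^ (m + 1 + p * α) := by
  have hintegrand : ∀ s ∈ uIcc 0 R, ((R ^ p - s ^ p) / A) ^ α * (c * s ^ m)
      = c / A ^ α * ((R ^ p - s ^ p) ^ α * s ^ m) := by
    intro s hs
    rw [uIcc_of_le hR.le] at hs
    have hsR : s ^ p ≤ R ^ p := rpow_le_rpow hs.1 hs.2 hp
    rw [div_rpow (by linarith) hA]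
    ring
  rw [intervalIntegral.integral_congr hintegrand, intervalIntegral.integral_const_mul,
    integral_rpow_sub_rpow_rpow_mul_rpow α m hp hR, mul_assoc]

lemma tendsto_mul_rpow_mul_rpow_nhdsGT_zero_atBot {C K L γ e e' : ℝ} (hC : C < 0)
    (hK : 0 < K) (hL : 0 < L) (hexp : γ * e + e' < 0) :
    Tendsto (fun R : ℝ => C * (K * R ^ e) ^ γ * (L * R ^ e')) (𝓝[>] 0) atBot := by
  have hcoef : C * K ^ γ * L < 0 :=
    mul_neg_of_neg_of_pos (mul_neg_of_neg_of_pos hC (rpow_pos_of_pos hK γ)) hL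
  refine ((tendsto_const_mul_atBot_of_neg hcoef).mpr
    (tendsto_rpow_neg_nhdsGT_zero hexp)).congr' ?_
  filter_upwards [self_mem_nhdsWithin] with R (hR : 0 < R)
  rw [mul_rpow hK.le (rpow_nonneg hR.le e), ← rpow_mul hR.le, mul_comm e γ, rpow_add hR]
  ring

/-- for power functions `f(t) = a t^q`, `g(t) = b t^r`, the quantity in
the assumption of the existence theorem tends to `−∞` as `R → 0⁺`; in particular its
limsup is `< −1`. -/
theorem statement_17 {n : ℕ} (hn : 0 < n) (p : ℝ) (hp : 1 ≤ p)
    (a b q r : ℝ) (ha : 0 < a) (hb : 0 < b) (hq : 1 < q) (hr0 : 0 < r) (hr1 : r < 1)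
    (k k' g'' : ℝ → ℝ)
    (hk : ∀ t : ℝ, k t = (t / (a * q)) ^ (1 / (q - 1)))
    (hk' : ∀ t : ℝ, k' t = 1 / ((q - 1) * (a * q)) * (t / (a * q)) ^ (1 / (q - 1) - 1))
    (hg'' : ∀ t : ℝ, g'' t = b * r * (r - 1) * t ^ (r - 2)) :
    Tendsto (fun R : ℝ =>
        g'' (∫ s in (0:ℝ)..R, k (R ^ p - s ^ p) *
              (n * (volume (Metric.ball (0 : Rn n) 1)).toReal * s ^ ((n:ℝ) - 1))) *
          ∫ s in (0:ℝ)..R, k' (R ^ p - s ^ p) *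
              (n * (volume (Metric.ball (0 : Rn n) 1)).toReal * s ^ ((n:ℝ) - 1)))
      (𝓝[>] (0:ℝ)) atBot ∧
    ∃ c : ℝ, c < -1 ∧ ∀ᶠ R in 𝓝[>] (0:ℝ),
      g'' (∫ s in (0:ℝ)..R, k (R ^ p - s ^ p) *
            (n * (volume (Metric.ball (0 : Rn n) 1)).toReal * s ^ ((n:ℝ) - 1))) *
        (∫ s in (0:ℝ)..R, k' (R ^ p - s ^ p) *
            (n * (volume (Metric.ball (0 : Rn n) 1)).toReal * s ^ ((n:ℝ) - 1))) ≤ c := by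
  set ω := (volume (ball (0 : Rn n) 1)).toReal
  set α := 1 / (q - 1)
  have hω : 0 < ω :=
    ENNReal.toReal_pos (measure_ball_pos volume 0 one_pos).ne' measure_ball_lt_top.ne
  have hn' : (1 : ℝ) ≤ n := by exact_mod_cast hn
  have hm : (0 : ℝ) ≤ n - 1 := by linarith
  have hq1 : 0 < q - 1 := by linarith
  have haq : 0 < a * q := mul_pos ha (by linarith)
  have hα : 0 < α := one_div_pos.mpr hq1
  have hlim : Tendsto (fun R : ℝ =>
      b * r * (r - 1) * (n * ω / (a * q) ^ α * profileIntegral p α (n - 1) *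
        R ^ ((n - 1) + 1 + p * α)) ^ (r - 2) *
      (1 / ((q - 1) * (a * q)) *
        (n * ω / (a * q) ^ (α - 1) * profileIntegral p (α - 1) (n - 1)) *
        R ^ ((n - 1) + 1 + p * (α - 1)))) (𝓝[>] 0) atBot := by
    refine tendsto_mul_rpow_mul_rpow_nhdsGT_zero_atBot (by nlinarith [mul_pos hb hr0]) ?_ ?_ ?_
    · exact mul_pos (div_pos (by positivity) (rpow_pos_of_pos haq α))
        (profileIntegral_pos hp (by linarith) hm)
    · exact mul_pos (one_div_pos.mpr (mul_pos hq1 haq)) (mul_pos (div_pos (by positivity)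
        (rpow_pos_of_pos haq _)) (profileIntegral_pos hp (by linarith) hm))
    · nlinarith [mul_pos (show (0:ℝ) < n - 1 + 1 + p * α by nlinarith) (sub_pos.mpr hr1)]
  refine (fun H => ⟨H, -2, by norm_num, H.eventually (eventually_le_atBot _)⟩) (hlim.congr' ?_)
  filter_upwards [self_mem_nhdsWithin] with R (hR : 0 < R)
  simp only [hk, hk', hg'', mul_assoc (1 / ((q - 1) * (a * q)))]
  rw [intervalIntegral.integral_const_mul,
    integral_div_rpow_mul_const_mul_rpow _ _ _ (by linarith) haq.le hR,
    integral_div_rpow_mul_const_mul_rpow _ _ _ (by linarith) haq.le hR]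
end
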